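/- arXiv:1110.4065 — 8 statements merged into one kernel-verified Lean document; each statement's English description precedes it below -/
import Mathlib

section
/- Let c > 0. Then there exists a sequence (a_j)_{j≥0} of real numbers such that the function φ₁(t) := ∫_ℝ e^{−tλ²}/(λ² + c²) dλ admits the asymptotic expansion φ₁(t) ∼ Σ_{j=0}^∞ a_j t^{j/2} as t → 0⁺; precisely, for every N ∈ ℕ there is a constant C_N > 0 such that |φ₁(t) − Σ_{j=0}^N a_j t^{j/2}| ≤ C_N t^{(N+1)/2} for all t ∈ (0,1]. -/
open MeasureTheory Real Set Filter Topology
open scoped ContDiff Nat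

/-!
Differentiating under the integral sign gives `φ₁' = c² φ₁ - √(π / t)`. Solving this linear
equation with the boundary condition `φ₁(t) → 0` as `t → ∞` yields
`e^{-c² t} φ₁(t) = π / c - 2√π G(√t)`, where `G(s) = ∫₀ˢ e^{-c² v²} dv`. Hence
`φ₁(t) = f(√t)` for the smooth function `f(s) = e^{c² s²} (π / c - 2√π G(s))`, and Taylor's
theorem for `f` at `0` is the expansion in powers of `√t`.
-/

theorem exists_sqrt_expansion_of_contDiffOn {f : ℝ → ℝ} (hf : ContDiffOn ℝ ∞ f (Icc 0 1)) :
    ∃ a : ℕ → ℝ, ∀ N : ℕ, ∃ C : ℝ, 0 < C ∧ ∀ t ∈ Ioc (0 : ℝ) 1,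
      |f √t - ∑ j ∈ Finset.range (N + 1), a j * t ^ ((j : ℝ) / 2)| ≤
        C * t ^ (((N : ℝ) + 1) / 2) := by
  refine ⟨fun j => (j ! : ℝ)⁻¹ * iteratedDerivWithin j f (Icc 0 1) 0, fun N => ?_⟩
  obtain ⟨C, hC⟩ :=
    exists_taylor_mean_remainder_bound zero_le_one (hf.of_le (by exact_mod_cast le_top))
  refine ⟨max C 1, by positivity, fun t ht => ?_⟩
  have hsqrt_mem : √t ∈ Icc (0 : ℝ) 1 := ⟨sqrt_nonneg t, sqrt_le_one.mpr ht.2⟩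
  have hpow (r : ℕ) : t ^ ((r : ℝ) / 2) = √t ^ r := by
    rw [rpow_div_two_eq_sqrt _ ht.1.le, rpow_natCast]
  have htaylor : taylorWithinEval f N (Icc 0 1) 0 √t =
      ∑ j ∈ Finset.range (N + 1),
        (j ! : ℝ)⁻¹ * iteratedDerivWithin j f (Icc 0 1) 0 * t ^ ((j : ℝ) / 2) := by
    simp only [taylor_within_apply, smul_eq_mul, sub_zero, hpow]
    exact Finset.sum_congr rfl fun j _ => by ring
  calc _ = ‖f √t - taylorWithinEval f N (Icc 0 1) 0 √t‖ := by rw [htaylor, norm_eq_abs]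
    _ ≤ C * (√t - 0) ^ (N + 1) := hC _ hsqrt_mem
    _ ≤ max C 1 * t ^ (((N : ℝ) + 1) / 2) := by
      rw [sub_zero, ← Nat.cast_succ, hpow]
      gcongr
      exact le_max_left _ _

noncomputable def phi₁ (c t : ℝ) : ℝ := ∫ l : ℝ, exp (-t * l ^ 2) / (l ^ 2 + c ^ 2)

section phi₁

variable {c t : ℝ}

lemma exp_neg_mul_sq_div_le (hc : c ≠ 0) (t l : ℝ) :
    exp (-t * l ^ 2) / (l ^ 2 + c ^ 2) ≤ exp (-t * l ^ 2) / c ^ 2 := by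
  gcongr
  exact le_add_of_nonneg_left (sq_nonneg l)

lemma continuous_exp_neg_mul_sq_div (hc : c ≠ 0) (t : ℝ) :
    Continuous fun l : ℝ => exp (-t * l ^ 2) / (l ^ 2 + c ^ 2) :=
  .div (by fun_prop) (by fun_prop) fun l => by positivity

lemma integrable_exp_neg_mul_sq_div (hc : c ≠ 0) (ht : 0 < t) :
    Integrable fun l : ℝ => exp (-t * l ^ 2) / (l ^ 2 + c ^ 2) := by
  refine ((integrable_exp_neg_mul_sq ht).div_const (c ^ 2)).mono'
    (continuous_exp_neg_mul_sq_div hc t).aestronglyMeasurable ?_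
  filter_upwards with l
  rw [norm_of_nonneg (by positivity)]
  exact exp_neg_mul_sq_div_le hc t l

lemma hasDerivAt_phi₁ (hc : c ≠ 0) (ht : 0 < t) :
    HasDerivAt (phi₁ c) (c ^ 2 * phi₁ c t - √(π / t)) t := by
  set F : ℝ → ℝ → ℝ := fun x l => exp (-x * l ^ 2) / (l ^ 2 + c ^ 2)
  have hF' (x l : ℝ) : HasDerivAt (F · l) (c ^ 2 * F x l - exp (-x * l ^ 2)) x := by
    have hd := (((hasDerivAt_id x).neg.mul_const (l ^ 2)).exp).div_const (l ^ 2 + c ^ 2)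
    refine hd.congr_deriv ?_
    have : l ^ 2 + c ^ 2 ≠ 0 := by positivity
    simp only [F, Pi.neg_apply, id_eq]
    field_simp
    ring
  have hbound : ∀ l : ℝ, ∀ x ∈ Metric.ball t (t / 2),
      ‖c ^ 2 * F x l - exp (-x * l ^ 2)‖ ≤ exp (-(t / 2) * l ^ 2) := by
    intro l x hx
    have hx : t / 2 ≤ x := by
      rw [Metric.mem_ball, dist_eq, abs_lt] at hx
      linarith [hx.1]
    have hcF : c ^ 2 * F x l ≤ exp (-x * l ^ 2) := by
      calc c ^ 2 * F x l = c ^ 2 / (l ^ 2 + c ^ 2) * exp (-x * l ^ 2) := by ring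
        _ ≤ 1 * exp (-x * l ^ 2) := by
          gcongr
          exact div_le_one_of_le₀ (le_add_of_nonneg_left (sq_nonneg l)) (by positivity)
        _ = exp (-x * l ^ 2) := one_mul _
    calc ‖c ^ 2 * F x l - exp (-x * l ^ 2)‖ ≤ exp (-x * l ^ 2) :=
          abs_sub_le_of_nonneg_of_le (by positivity) hcF (by positivity) le_rfl
      _ ≤ exp (-(t / 2) * l ^ 2) := by gcongr
  have hderiv := hasDerivAt_integral_of_dominated_loc_of_deriv_le (μ := volume)
    (Metric.ball_mem_nhds t (half_pos ht))
    (.of_forall fun x => (continuous_exp_neg_mul_sq_div hc x).aestronglyMeasurable)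
    (integrable_exp_neg_mul_sq_div hc ht)
    (by have := continuous_exp_neg_mul_sq_div hc t; fun_prop) (.of_forall hbound)
    (integrable_exp_neg_mul_sq (half_pos ht)) (.of_forall fun l x _ => hF' x l)
  refine hderiv.2.congr_deriv ?_
  rw [integral_sub ((integrable_exp_neg_mul_sq_div hc ht).const_mul _)
    (integrable_exp_neg_mul_sq ht), integral_const_mul, integral_gaussian]
  rfl

lemma phi₁_nonneg (c t : ℝ) : 0 ≤ phi₁ c t :=
  integral_nonneg fun l => by positivity

lemma phi₁_le (hc : c ≠ 0) (ht : 0 < t) : phi₁ c t ≤ √(π / t) / c ^ 2 := by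
  calc phi₁ c t ≤ ∫ l : ℝ, exp (-t * l ^ 2) / c ^ 2 :=
        integral_mono (integrable_exp_neg_mul_sq_div hc ht)
          ((integrable_exp_neg_mul_sq ht).div_const _) (exp_neg_mul_sq_div_le hc t)
    _ = √(π / t) / c ^ 2 := by rw [integral_div, integral_gaussian]

lemma tendsto_phi₁_atTop (hc : c ≠ 0) : Tendsto (phi₁ c) atTop (𝓝 0) := by
  have hbound : Tendsto (fun t => √(π / t) / c ^ 2) atTop (𝓝 0) := by
    simpa using ((tendsto_const_nhds.div_atTop tendsto_id).sqrt).div_const (c ^ 2)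
  exact squeeze_zero' (.of_forall (phi₁_nonneg c))
    ((eventually_gt_atTop 0).mono fun t ht => phi₁_le hc ht) hbound

end phi₁

noncomputable def gaussianPrimitive (c s : ℝ) : ℝ := ∫ v in (0 : ℝ)..s, exp (-c ^ 2 * v ^ 2)

section gaussianPrimitive

variable {c : ℝ}

lemma hasDerivAt_gaussianPrimitive (c s : ℝ) :
    HasDerivAt (gaussianPrimitive c) (exp (-c ^ 2 * s ^ 2)) s :=
  (by fun_prop : Continuous fun v : ℝ => exp (-c ^ 2 * v ^ 2)).integral_hasStrictDerivAt 0 s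
    |>.hasDerivAt

lemma contDiff_gaussianPrimitive (c : ℝ) : ContDiff ℝ ∞ (gaussianPrimitive c) := by
  rw [contDiff_infty_iff_deriv]
  refine ⟨fun s => (hasDerivAt_gaussianPrimitive c s).differentiableAt, ?_⟩
  rw [funext fun s => (hasDerivAt_gaussianPrimitive c s).deriv]
  fun_prop

lemma tendsto_gaussianPrimitive_atTop (hc : 0 < c) :
    Tendsto (gaussianPrimitive c) atTop (𝓝 (√π / (2 * c))) := by
  have hlim := intervalIntegral_tendsto_integral_Ioi 0
    (integrable_exp_neg_mul_sq (pow_pos hc 2)).integrableOn tendsto_id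
  rwa [integral_gaussian_Ioi, sqrt_div pi_pos.le, sqrt_sq hc.le, div_div, mul_comm c] at hlim

end gaussianPrimitive

section identity

variable {c t : ℝ}

lemma hasDerivAt_exp_mul_phi₁_add_gaussianPrimitive (hc : c ≠ 0) (ht : 0 < t) :
    HasDerivAt (fun u => exp (-c ^ 2 * u) * phi₁ c u + 2 * √π * gaussianPrimitive c √u) 0 t := by
  have hexp : HasDerivAt (fun u => exp (-c ^ 2 * u)) (exp (-c ^ 2 * t) * -c ^ 2) t := by
    simpa using ((hasDerivAt_id t).const_mul (-c ^ 2)).exp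
  have hG := (hasDerivAt_gaussianPrimitive c √t).comp t (hasDerivAt_sqrt ht.ne')
  rw [sq_sqrt ht.le] at hG
  refine ((hexp.mul (hasDerivAt_phi₁ hc ht)).add (hG.const_mul (2 * √π))).congr_deriv ?_
  have : √t ≠ 0 := by positivity
  rw [sqrt_div pi_pos.le]
  field_simp
  ring

lemma exp_mul_phi₁_eq (hc : 0 < c) (ht : 0 < t) :
    exp (-c ^ 2 * t) * phi₁ c t = π / c - 2 * √π * gaussianPrimitive c √t := by
  set D := fun u => exp (-c ^ 2 * u) * phi₁ c u + 2 * √π * gaussianPrimitive c √u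
  have hD' (u : ℝ) (hu : 0 < u) := hasDerivAt_exp_mul_phi₁_add_gaussianPrimitive hc.ne' hu
  have hconst : ∀ u ∈ Ioi (0 : ℝ), D u = D t := fun u hu =>
    isOpen_Ioi.is_const_of_deriv_eq_zero isPreconnected_Ioi
      (fun x hx => (hD' x hx).differentiableAt.differentiableWithinAt)
      (fun x hx => (hD' x hx).deriv) hu ht
  have hlim : Tendsto D atTop (𝓝 (π / c)) := by
    have hexp : Tendsto (fun u => exp (-c ^ 2 * u)) atTop (𝓝 0) :=
      tendsto_exp_atBot.comp (tendsto_id.const_mul_atTop_of_neg (by nlinarith))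
    have := (hexp.mul (tendsto_phi₁_atTop hc.ne')).add
      (((tendsto_gaussianPrimitive_atTop hc).comp tendsto_sqrt_atTop).const_mul (2 * √π))
    have hval : 0 * 0 + 2 * √π * (√π / (2 * c)) = π / c := by
      rw [mul_zero, zero_add, mul_div_assoc', mul_assoc, mul_self_sqrt pi_pos.le]
      field_simp
    rwa [hval] at this
  have hDt : D t = π / c :=
    tendsto_nhds_unique (tendsto_const_nhds.congr'
      ((eventually_gt_atTop 0).mono fun u hu => (hconst u hu).symm)) hlim
  simp only [D] at hDt
  linarith

end identity

/-- Lemma `Lemas1`: the function `φ₁(t) = ∫_ℝ e^{-tλ²}/(λ²+c²) dλ` admits an asymptotic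
expansion in powers `t^{j/2}` as `t → 0⁺`. -/
theorem stmt0 (c : ℝ) (hc : 0 < c) :
    ∃ a : ℕ → ℝ, ∀ N : ℕ, ∃ C : ℝ, 0 < C ∧ ∀ t ∈ Set.Ioc (0:ℝ) 1,
      |(∫ l : ℝ, Real.exp (-t * l ^ 2) / (l ^ 2 + c ^ 2)) -
        ∑ j ∈ Finset.range (N + 1), a j * t ^ ((j : ℝ) / 2)| ≤
      C * t ^ (((N : ℝ) + 1) / 2) := by
  have hf : ContDiff ℝ ∞ fun s =>
      exp (c ^ 2 * s ^ 2) * (π / c - 2 * √π * gaussianPrimitive c s) := by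
    have := contDiff_gaussianPrimitive c
    fun_prop
  obtain ⟨a, ha⟩ := exists_sqrt_expansion_of_contDiffOn hf.contDiffOn
  refine ⟨a, fun N => ?_⟩
  obtain ⟨C, hC, hbound⟩ := ha N
  refine ⟨C, hC, fun t ht => ?_⟩
  have hphi : phi₁ c t = exp (c ^ 2 * √t ^ 2) * (π / c - 2 * √π * gaussianPrimitive c √t) := by
    rw [sq_sqrt ht.1.le, ← exp_mul_phi₁_eq hc ht.1, ← mul_assoc, ← exp_add]
    simp
  show |phi₁ c t - _| ≤ _
  rw [hphi]
  exact hbound t ht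
end

section
/- For every c > 0 and every t > 0 one has ∫_ℝ e^{−tλ²}/(λ² + c²) dλ = e^{tc²} ( π/c − √π ∫₀^t e^{−sc²} s^{−1/2} ds ). -/
/-!
Writing `e^{-tλ²}/(λ² + c²) = e^{tc²} ∫_t^∞ e^{-s(λ² + c²)} ds` and exchanging the order of
integration turns the left-hand side into `e^{tc²} √π ∫_t^∞ e^{-sc²} s^{-1/2} ds`, by the Gaussian
integral in `λ`. The integral of `e^{-sc²} s^{-1/2}` over all of `(0, ∞)` is `Γ(1/2)/c = √π/c`,
and subtracting the part over `(0, t]` gives the identity.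
-/

open MeasureTheory Real Set

section

variable {b : ℝ}

lemma integral_exp_neg_mul_Ioi (hb : 0 < b) (t : ℝ) :
    ∫ s in Ioi t, exp (-b * s) = exp (-b * t) / b := by
  rw [integral_exp_mul_Ioi (neg_neg_of_pos hb), neg_div_neg_eq]

lemma integrableOn_exp_neg_mul_mul_rpow_neg_half (hb : 0 < b) :
    IntegrableOn (fun s : ℝ => exp (-s * b) * s ^ (-(1:ℝ)/2)) (Ioi 0) := by
  refine (integrableOn_rpow_mul_exp_neg_mul_rpow (p := 1) (s := -(1:ℝ)/2) (by norm_num) one_pos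
    hb).congr_fun (fun s _ => ?_) measurableSet_Ioi
  simp only [rpow_one]
  rw [mul_comm, neg_mul_comm, mul_comm b]

lemma integral_exp_neg_mul_mul_rpow_neg_half (hb : 0 < b) :
    ∫ s in Ioi 0, exp (-s * b) * s ^ (-(1:ℝ)/2) = √(π / b) := by
  have hGamma := integral_rpow_mul_exp_neg_mul_Ioi (a := 1/2) one_half_pos hb
  rw [Gamma_one_half_eq, ← sqrt_eq_rpow, ← sqrt_mul (one_div_pos.2 hb).le, one_div_mul_eq_div]
    at hGamma
  rw [← hGamma]
  refine setIntegral_congr_fun measurableSet_Ioi (fun s _ => ?_)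
  rw [mul_comm, neg_mul_comm, mul_comm b]
  norm_num

lemma exp_neg_sq_add_mul (l s : ℝ) :
    exp (-(l ^ 2 + b) * s) = exp (-s * b) * exp (-s * l ^ 2) := by
  rw [← exp_add]
  ring_nf

lemma integral_exp_neg_sq_add_mul {s : ℝ} (hs : 0 < s) :
    ∫ l : ℝ, exp (-(l ^ 2 + b) * s) = √π * (exp (-s * b) * s ^ (-(1:ℝ)/2)) := by
  simp_rw [exp_neg_sq_add_mul]
  rw [integral_const_mul, integral_gaussian, sqrt_div' _ hs.le, neg_div, rpow_neg hs.le,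
    ← sqrt_eq_rpow]
  ring

lemma integrable_prod_exp_neg_sq_add_mul (hb : 0 < b) {t : ℝ} (ht : 0 < t) :
    Integrable (fun z : ℝ × ℝ => exp (-(z.1 ^ 2 + b) * z.2))
      (volume.prod (volume.restrict (Ioi t))) := by
  refine (integrable_prod_iff' (by fun_prop)).2 ⟨?_, ?_⟩
  · filter_upwards [ae_restrict_mem measurableSet_Ioi] with s hs
    simp_rw [exp_neg_sq_add_mul]
    exact (integrable_exp_neg_mul_sq (ht.trans hs)).const_mul _
  · have hnorm : ∀ s ∈ Ioi t, ∫ l : ℝ, ‖exp (-(l ^ 2 + b) * s)‖ =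
        √π * (exp (-s * b) * s ^ (-(1:ℝ)/2)) := fun s hs => by
      simp only [norm_eq_abs, abs_exp]
      exact integral_exp_neg_sq_add_mul (ht.trans hs)
    exact IntegrableOn.congr_fun (((integrableOn_exp_neg_mul_mul_rpow_neg_half hb).mono_set
      (Ioi_subset_Ioi ht.le)).const_mul √π) (fun s hs => (hnorm s hs).symm)
      measurableSet_Ioi

lemma integral_exp_neg_mul_sq_div_sq_add (hb : 0 < b) {t : ℝ} (ht : 0 < t) :
    ∫ l : ℝ, exp (-t * l ^ 2) / (l ^ 2 + b) =
      exp (t * b) * (√π * ∫ s in Ioi t, exp (-s * b) * s ^ (-(1:ℝ)/2)) := by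
  have hlaplace : ∀ l : ℝ, exp (-t * l ^ 2) / (l ^ 2 + b) =
      exp (t * b) * ∫ s in Ioi t, exp (-(l ^ 2 + b) * s) := fun l => by
    rw [integral_exp_neg_mul_Ioi (by positivity), mul_div_assoc', ← exp_add]
    ring_nf
  rw [integral_congr_ae (ae_of_all _ hlaplace), integral_const_mul,
    integral_integral_swap (integrable_prod_exp_neg_sq_add_mul hb ht),
    setIntegral_congr_fun measurableSet_Ioi fun s hs => integral_exp_neg_sq_add_mul (ht.trans hs),
    integral_const_mul]

end

/-- The exact identity from the proof of Lemma `Lemas1`: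
`∫_ℝ e^{-tλ²}/(λ²+c²) dλ = e^{tc²} (π/c - √π ∫₀ᵗ e^{-sc²} s^{-1/2} ds)`. -/
theorem stmt1 (c t : ℝ) (hc : 0 < c) (ht : 0 < t) :
    (∫ l : ℝ, Real.exp (-t * l ^ 2) / (l ^ 2 + c ^ 2)) =
      Real.exp (t * c ^ 2) *
        (Real.pi / c -
          Real.sqrt Real.pi * ∫ s in (0:ℝ)..t, Real.exp (-s * c ^ 2) * s ^ (-(1:ℝ)/2)) := by
  have hc2 : 0 < c ^ 2 := by positivity
  have hint := integrableOn_exp_neg_mul_mul_rpow_neg_half hc2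
  have htail : ∫ s in Ioi t, exp (-s * c ^ 2) * s ^ (-(1:ℝ)/2) =
      √(π / c ^ 2) - ∫ s in (0:ℝ)..t, exp (-s * c ^ 2) * s ^ (-(1:ℝ)/2) := by
    rw [← integral_exp_neg_mul_mul_rpow_neg_half hc2, ← Ioc_union_Ioi_eq_Ioi ht.le,
      setIntegral_union (Ioc_disjoint_Ioi le_rfl) measurableSet_Ioi
        (hint.mono_set Ioc_subset_Ioi_self) (hint.mono_set (Ioi_subset_Ioi ht.le)),
      intervalIntegral.integral_of_le ht.le]
    ring
  rw [integral_exp_neg_mul_sq_div_sq_add hc2 ht, htail, mul_sub, sqrt_div' _ hc2.le,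
    sqrt_sq hc.le, ← mul_div_assoc, mul_self_sqrt pi_pos.le]
end

section
/- For every j > 0 and every s ∈ ℂ with Re(s) > 0 one has (j/π) ∫₀^∞ t^{s−1} e^{−tj²} ( ∫_ℝ e^{−tλ²}/(λ² + j²) dλ ) dt = j^{−2s} Γ(s + 1/2) / (√π · s). -/
/-! Since `e^{-tj²} e^{-tλ²} = e^{-t(λ²+j²)}`, the whole left side is a Mellin transform in `t` of
`∫ e^{-tφ(λ)} w(λ) dλ`. Exchanging the integrals (Tonelli applies because the absolute integrand
has the same shape, with `Re s` in place of `s`) and using `∫₀^∞ t^{c-1} e^{-tφ} dt = Γ(c) φ^{-c}`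
turns it into `Γ(s) ∫ (λ²+j²)^{-s-1} dλ`. The same exchange read backwards, with the Gaussian
integral `∫ e^{-tλ²} dλ = √(π/t)`, evaluates `∫ (λ²+j²)^{-a} dλ = √π Γ(a-1/2) / Γ(a) · j^{1-2a}`. -/

open MeasureTheory Real Set

theorem integrableOn_rpow_mul_exp_neg_mul_Ioi {a r : ℝ} (ha : 0 < a) (hr : 0 < r) :
    IntegrableOn (fun t : ℝ => t ^ (a - 1) * rexp (-(r * t))) (Ioi 0) := by
  refine (integrableOn_rpow_mul_exp_neg_mul_rpow (s := a - 1) (by linarith) zero_lt_one hr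
    ).congr_fun (fun t _ => ?_) measurableSet_Ioi
  simp [rpow_one]

theorem Complex.one_div_ofReal_cpow_eq_cpow_neg {r : ℝ} (hr : 0 < r) (a : ℂ) :
    (1 / (r : ℂ)) ^ a = (r : ℂ) ^ (-a) := by
  rw [one_div, Complex.inv_cpow _ _ (by simp [Complex.arg_ofReal_of_nonneg hr.le, pi_ne_zero.symm]),
    Complex.cpow_neg]

section MellinLaplace

variable {X : Type*} [MeasurableSpace X] {μ : Measure X} [SFinite μ]
  {φ : X → ℝ} {w : X → ℂ} {c : ℂ}

theorem integrable_cpow_mul_exp_neg_mul_prod (hc : 0 < c.re) (hφ : ∀ x, 0 < φ x)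
    (hφm : Measurable φ) (hw : AEStronglyMeasurable w μ)
    (hint : Integrable (fun x => φ x ^ (-c.re) * ‖w x‖) μ) :
    Integrable (fun p : ℝ × X => (p.1 : ℂ) ^ (c - 1) * Complex.exp (-(φ p.2 * p.1)) * w p.2)
      ((volume.restrict (Ioi 0)).prod μ) := by
  have hmeas : AEStronglyMeasurable
      (fun p : ℝ × X => (p.1 : ℂ) ^ (c - 1) * Complex.exp (-(φ p.2 * p.1)) * w p.2)
      ((volume.restrict (Ioi 0)).prod μ) := by
    refine AEStronglyMeasurable.mul ?_ (hw.comp_snd)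
    fun_prop
  have hnorm : ∀ x, ∀ t > (0 : ℝ), ‖(t : ℂ) ^ (c - 1) * Complex.exp (-(φ x * t)) * w x‖
      = t ^ (c.re - 1) * rexp (-(φ x * t)) * ‖w x‖ := by
    intro x t ht
    rw [norm_mul, norm_mul, Complex.norm_cpow_eq_rpow_re_of_pos ht, ← Complex.ofReal_mul,
      ← Complex.ofReal_neg, Complex.norm_exp_ofReal, Complex.sub_re, Complex.one_re]
  refine (integrable_prod_iff' hmeas).2 ⟨Filter.Eventually.of_forall fun x => ?_, ?_⟩
  · refine Integrable.mono' (((integrableOn_rpow_mul_exp_neg_mul_Ioi hc (hφ x))).mul_const ‖w x‖)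
      (by fun_prop) ?_
    filter_upwards [self_mem_ae_restrict measurableSet_Ioi] with t ht
    rw [hnorm x t ht]
  · have hinner : ∀ x, ∫ t in Ioi (0 : ℝ), ‖(t : ℂ) ^ (c - 1) * Complex.exp (-(φ x * t)) * w x‖
        = Real.Gamma c.re * (φ x ^ (-c.re) * ‖w x‖) := by
      intro x
      rw [setIntegral_congr_fun measurableSet_Ioi (hnorm x), integral_mul_const,
        Real.integral_rpow_mul_exp_neg_mul_Ioi hc (hφ x), one_div, Real.inv_rpow (hφ x).le,
        ← Real.rpow_neg (hφ x).le]
      ring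
    simp_rw [hinner]
    exact hint.const_mul _

theorem mellin_integral_exp_neg_mul (hc : 0 < c.re) (hφ : ∀ x, 0 < φ x)
    (hφm : Measurable φ) (hw : AEStronglyMeasurable w μ)
    (hint : Integrable (fun x => φ x ^ (-c.re) * ‖w x‖) μ) :
    mellin (fun t => ∫ x, Complex.exp (-(φ x * t)) * w x ∂μ) c
      = Complex.Gamma c * ∫ x, (φ x : ℂ) ^ (-c) * w x ∂μ := calc
  _ = ∫ t in Ioi (0 : ℝ), ∫ x, (t : ℂ) ^ (c - 1) * Complex.exp (-(φ x * t)) * w x ∂μ := by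
    simp_rw [mellin, smul_eq_mul, mul_assoc, integral_const_mul]
  _ = ∫ x, (∫ t in Ioi (0 : ℝ), (t : ℂ) ^ (c - 1) * Complex.exp (-(φ x * t)) * w x) ∂μ :=
    integral_integral_swap (integrable_cpow_mul_exp_neg_mul_prod hc hφ hφm hw hint)
  _ = ∫ x, Complex.Gamma c * ((φ x : ℂ) ^ (-c) * w x) ∂μ := by
    refine integral_congr_ae (Filter.Eventually.of_forall fun x => ?_)
    dsimp only
    rw [integral_mul_const, Complex.integral_cpow_mul_exp_neg_mul_Ioi hc (hφ x),
      Complex.one_div_ofReal_cpow_eq_cpow_neg (hφ x)]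
    ring
  _ = _ := integral_const_mul _ _

end MellinLaplace

theorem integrable_rpow_neg_sq_add_sq {r j : ℝ} (hr : 1 / 2 < r) (hj : j ≠ 0) :
    Integrable fun l : ℝ => (l ^ 2 + j ^ 2) ^ (-r) := by
  have h := ((integrable_rpow_neg_one_add_norm_sq (E := ℝ) (μ := volume) (r := 2 * r)
    (by simp; linarith)).comp_div hj).const_mul ((j ^ 2) ^ (-r))
  refine h.congr (Filter.Eventually.of_forall fun l => ?_)
  simp only [Real.norm_eq_abs, sq_abs]
  rw [show -(2 * r) / 2 = -r by ring, ← Real.mul_rpow (by positivity) (by positivity)]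
  congr 1
  field_simp
  ring

theorem integral_exp_neg_sq_add_sq_mul {t : ℝ} (ht : 0 < t) (j : ℝ) :
    ∫ l : ℝ, Complex.exp (-((l ^ 2 + j ^ 2 : ℝ) * t))
      = √π * (t : ℂ) ^ (-(1 / 2) : ℂ) * Complex.exp (-(j ^ 2 * t)) := by
  have hsqrt : √(π / t) = √π * t ^ (-(1 / 2) : ℝ) := by
    rw [Real.sqrt_div' _ ht.le, Real.sqrt_eq_rpow t, Real.rpow_neg ht.le, div_eq_mul_inv]
  calc ∫ l : ℝ, Complex.exp (-((l ^ 2 + j ^ 2 : ℝ) * t))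
      = ∫ l : ℝ, ((rexp (-(j ^ 2 * t)) * rexp (-t * l ^ 2) : ℝ) : ℂ) := by
        refine integral_congr_ae (Filter.Eventually.of_forall fun l => ?_)
        dsimp only
        rw [← Real.exp_add, Complex.ofReal_exp]
        push_cast
        ring_nf
    _ = _ := by
        rw [integral_complex_ofReal, integral_const_mul, integral_gaussian, hsqrt]
        push_cast [Complex.ofReal_cpow ht.le, Complex.ofReal_exp]
        ring

theorem integral_cpow_neg_sq_add_sq {a : ℂ} (ha : 1 / 2 < a.re) {j : ℝ} (hj : 0 < j) :
    ∫ l : ℝ, ((l ^ 2 + j ^ 2 : ℝ) : ℂ) ^ (-a)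
      = √π * Complex.Gamma (a - 1 / 2) / Complex.Gamma a * (j : ℂ) ^ (1 - 2 * a) := by
  have ha0 : 0 < a.re := by linarith
  have hmellin := mellin_integral_exp_neg_mul (μ := volume)
    (φ := fun l : ℝ => l ^ 2 + j ^ 2) (w := fun _ => 1) ha0 (fun l => by positivity)
    (by fun_prop) aestronglyMeasurable_const
    (by simpa using integrable_rpow_neg_sq_add_sq ha hj.ne')
  simp only [mul_one] at hmellin
  have hΓ : Complex.Gamma a ≠ 0 := Complex.Gamma_ne_zero_of_re_pos ha0
  have hj2 : (0 : ℝ) < j ^ 2 := by positivity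
  have hpow : (1 / ((j ^ 2 : ℝ) : ℂ)) ^ (a - 1 / 2) = (j : ℂ) ^ (1 - 2 * a) := by
    rw [Complex.one_div_ofReal_cpow_eq_cpow_neg hj2, ← Real.rpow_two,
      ← Complex.cpow_mul_ofReal_nonneg hj.le]
    push_cast
    ring_nf
  have hlhs : mellin (fun t => ∫ l : ℝ, Complex.exp (-((l ^ 2 + j ^ 2 : ℝ) * t))) a
      = √π * ((1 / ((j ^ 2 : ℝ) : ℂ)) ^ (a - 1 / 2) * Complex.Gamma (a - 1 / 2)) := by
    rw [mellin, ← Complex.integral_cpow_mul_exp_neg_mul_Ioi (by simp; linarith) hj2,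
      ← integral_const_mul]
    refine setIntegral_congr_fun measurableSet_Ioi fun t (ht : 0 < t) => ?_
    have ht' : (t : ℂ) ≠ 0 := Complex.ofReal_ne_zero.2 ht.ne'
    rw [smul_eq_mul, integral_exp_neg_sq_add_sq_mul ht,
      show a - 1 / 2 - 1 = (a - 1) + -(1 / 2) by ring, Complex.cpow_add _ _ ht']
    push_cast
    ring
  rw [hlhs, hpow] at hmellin
  rw [div_mul_eq_mul_div, eq_div_iff hΓ]
  linear_combination -hmellin

theorem mellin_integral_exp_neg_sq_add_sq_mul_inv {s : ℂ} (hs : 0 < s.re) {j : ℝ} (hj : 0 < j) :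
    mellin (fun t => ∫ l : ℝ,
        Complex.exp (-((l ^ 2 + j ^ 2 : ℝ) * t)) * ((l ^ 2 + j ^ 2 : ℝ) : ℂ)⁻¹) s
      = √π * Complex.Gamma (s + 1 / 2) / s * (j : ℂ) ^ (-2 * s - 1) := by
  have hφ : ∀ l : ℝ, 0 < l ^ 2 + j ^ 2 := fun l => by positivity
  have hint : Integrable fun l : ℝ =>
      (l ^ 2 + j ^ 2) ^ (-s.re) * ‖((l ^ 2 + j ^ 2 : ℝ) : ℂ)⁻¹‖ := by
    refine (integrable_rpow_neg_sq_add_sq (r := s.re + 1) (by linarith) hj.ne').congr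
      (Filter.Eventually.of_forall fun l => ?_)
    dsimp only
    rw [norm_inv, Complex.norm_real, Real.norm_of_nonneg (hφ l).le, neg_add,
      Real.rpow_add (hφ l), Real.rpow_neg_one]
  have hcombine : ∀ l : ℝ, ((l ^ 2 + j ^ 2 : ℝ) : ℂ) ^ (-s) * ((l ^ 2 + j ^ 2 : ℝ) : ℂ)⁻¹
      = ((l ^ 2 + j ^ 2 : ℝ) : ℂ) ^ (-(s + 1)) := fun l => by
    rw [neg_add, Complex.cpow_add _ _ (Complex.ofReal_ne_zero.2 (hφ l).ne'), Complex.cpow_neg_one]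
  rw [mellin_integral_exp_neg_mul hs hφ (by fun_prop) (by fun_prop) hint]
  simp only [hcombine]
  rw [integral_cpow_neg_sq_add_sq (by simp; linarith) hj, Complex.Gamma_add_one s
      (fun h => by simp [h] at hs), show s + 1 - 1 / 2 = s + 1 / 2 by ring]
  field_simp [Complex.Gamma_ne_zero_of_re_pos hs]
  ring_nf

/-- From the proof of Lemma `Ratcontr`: for `j > 0` and `Re s > 0`,
`(j/π) ∫₀^∞ t^{s-1} e^{-tj²} (∫_ℝ e^{-tλ²}/(λ²+j²) dλ) dt = j^{-2s} Γ(s+1/2)/(√π s)`. -/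
theorem stmt7 (j : ℝ) (hj : 0 < j) (s : ℂ) (hs : 0 < s.re) :
    ((j / Real.pi : ℝ) : ℂ) *
      (∫ t in Set.Ioi (0:ℝ), (t : ℂ) ^ (s - 1) * (Real.exp (-t * j ^ 2) : ℂ) *
        ((∫ l : ℝ, Real.exp (-t * l ^ 2) / (l ^ 2 + j ^ 2)) : ℂ)) =
      (j : ℂ) ^ (-2 * s) * Complex.Gamma (s + 1/2) / ((Real.sqrt Real.pi : ℂ) * s) := by
  have hinner : ∀ t ∈ Ioi (0 : ℝ), (t : ℂ) ^ (s - 1) * (rexp (-t * j ^ 2) : ℂ) *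
        ((∫ l : ℝ, rexp (-t * l ^ 2) / (l ^ 2 + j ^ 2)) : ℂ)
      = (t : ℂ) ^ (s - 1) • ∫ l : ℝ,
          Complex.exp (-((l ^ 2 + j ^ 2 : ℝ) * t)) * ((l ^ 2 + j ^ 2 : ℝ) : ℂ)⁻¹ := by
    intro t _
    rw [smul_eq_mul, mul_assoc, ← integral_const_mul]
    congr 1
    refine integral_congr_ae (Filter.Eventually.of_forall fun l => ?_)
    dsimp only
    rw [div_eq_mul_inv, ← mul_assoc, ← Complex.ofReal_mul, ← Real.exp_add, Complex.ofReal_exp]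
    push_cast
    ring_nf
  have hj0 : (j : ℂ) ≠ 0 := Complex.ofReal_ne_zero.2 hj.ne'
  rw [setIntegral_congr_fun measurableSet_Ioi hinner, ← mellin,
    mellin_integral_exp_neg_sq_add_sq_mul_inv hs hj, sub_eq_add_neg, Complex.cpow_add _ _ hj0,
    Complex.cpow_neg_one]
  have hsqrt : (√π : ℂ) ≠ 0 := Complex.ofReal_ne_zero.2 (Real.sqrt_pos.2 pi_pos).ne'
  have hpi : (π : ℂ) = √π * √π := by rw [← Complex.ofReal_mul, Real.mul_self_sqrt pi_pos.le]
  rw [Complex.ofReal_div, hpi]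
  field_simp
end

section
/- For every c > 0 and j > 0 the iterated integral (j/π) ∫₀^∞ t^{−1} ( ∫_ℝ ( e^{−t(λ²+c²)} − e^{−t(λ²+j²)} )/(λ² + j²) dλ ) dt converges and equals −2 log(c + j) + 2 log(2j). -/
/-!
For fixed `λ` the `t`-integral is a Frullani integral of `e^{-x}`, equal to
`(log (λ² + j²) - log (λ² + c²)) / (λ² + j²)`; Fubini applies because
`|e^{-x} - e^{-y}| ≤ |x - y| e^{-min x y}` bounds the integrand by
`|c² - j²| e^{-min(c², j²) t} / (λ² + j²)`. Writing the difference of logarithms as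
`∫_c^j 2a / (λ² + a²) da` and swapping once more, partial fractions give
`∫_ℝ 2a / ((λ² + a²)(λ² + j²)) dλ = 2π / (j (a + j))`, whose integral over `a` from `c` to `j`
is `(2π / j) log (2j / (c + j))`.
-/

open MeasureTheory Real Set

lemma abs_exp_neg_sub_exp_neg_le {x y m : ℝ} (hx : m ≤ x) (hy : m ≤ y) :
    |exp (-x) - exp (-y)| ≤ |x - y| * exp (-m) := by
  wlog hxy : x ≤ y generalizing x y
  · simpa only [abs_sub_comm] using this hy hx (le_of_not_ge hxy)
  have hfactor : exp (-x) - exp (-y) = exp (-x) * (1 - exp (-(y - x))) := by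
    rw [mul_sub, ← exp_add]; ring_nf
  have hone_sub : 1 - exp (-(y - x)) ≤ y - x := by linarith [add_one_le_exp (-(y - x))]
  rw [abs_of_nonneg (sub_nonneg.2 (exp_le_exp.2 (neg_le_neg hxy))), abs_sub_comm,
    abs_of_nonneg (sub_nonneg.2 hxy), hfactor, mul_comm]
  exact mul_le_mul hone_sub (exp_le_exp.2 (neg_le_neg hx)) (exp_pos _).le (sub_nonneg.2 hxy)

lemma norm_inv_mul_exp_sub_exp_le {t A B m : ℝ} (ht : 0 < t) (hA : m ≤ A) (hB : m ≤ B) :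
    ‖t⁻¹ * (exp (-t * A) - exp (-t * B))‖ ≤ |A - B| * exp (-(m * t)) := by
  have h := abs_exp_neg_sub_exp_neg_le (mul_le_mul_of_nonneg_left hA ht.le)
    (mul_le_mul_of_nonneg_left hB ht.le)
  rw [← mul_sub, abs_mul, abs_of_pos ht] at h
  rw [norm_mul, norm_inv, norm_of_nonneg ht.le, norm_eq_abs, neg_mul, neg_mul, mul_comm m,
    inv_mul_le_iff₀ ht, ← mul_assoc]
  exact h

lemma integrableOn_inv_mul_exp_sub_exp {A B : ℝ} (hA : 0 < A) (hB : 0 < B) :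
    IntegrableOn (fun t : ℝ => t⁻¹ * (exp (-t * A) - exp (-t * B))) (Ioi 0) := by
  refine Integrable.mono' ((exp_neg_integrableOn_Ioi 0 (lt_min hA hB)).const_mul |A - B|)
    (by fun_prop) ?_
  filter_upwards [ae_restrict_mem measurableSet_Ioi] with t ht
  simpa only [neg_mul] using norm_inv_mul_exp_sub_exp_le ht (min_le_left A B) (min_le_right A B)

lemma integral_Ioi_inv_mul_exp_sub_exp {A B : ℝ} (hA : 0 < A) (hB : 0 < B) :
    ∫ t in Ioi 0, t⁻¹ * (exp (-t * A) - exp (-t * B)) = log B - log A := by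
  have hform : (fun t : ℝ => t⁻¹ * (exp (-t * A) - exp (-t * B))) =
      fun t => t⁻¹ • ((fun x => exp (-x)) (A * t) - (fun x => exp (-x)) (B * t)) := by
    ext t; simp only [smul_eq_mul, neg_mul, mul_comm t]
  have hcont : Continuous fun x : ℝ => exp (-x) := by fun_prop
  have h := Frullani.integral_Ioi_eq (hcont.locallyIntegrable.locallyIntegrableOn _) hA hB
    (L := 1) (R := 0) (by simpa using (hcont.tendsto 0).mono_left nhdsWithin_le_nhds)
    tendsto_exp_neg_atTop_nhds_zero (hform ▸ integrableOn_inv_mul_exp_sub_exp hA hB)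
  rw [hform, h, sub_zero, smul_eq_mul, mul_one, log_div hB.ne' hA.ne']

lemma inv_sq_add_sq_eq (x : ℝ) {a : ℝ} (ha : a ≠ 0) :
    (x ^ 2 + a ^ 2)⁻¹ = (a ^ 2)⁻¹ * (1 + (x / a) ^ 2)⁻¹ := by
  rw [← mul_inv]; congr 1; field_simp; ring

lemma integrable_inv_sq_add_sq {a : ℝ} (ha : a ≠ 0) :
    Integrable fun x : ℝ => (x ^ 2 + a ^ 2)⁻¹ := by
  simp_rw [inv_sq_add_sq_eq _ ha]
  exact (integrable_inv_one_add_sq.comp_div ha).const_mul _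

lemma integral_univ_inv_sq_add_sq {a : ℝ} (ha : 0 < a) :
    ∫ x : ℝ, (x ^ 2 + a ^ 2)⁻¹ = π / a := by
  simp_rw [inv_sq_add_sq_eq _ ha.ne']
  rw [integral_const_mul, Measure.integral_comp_div (fun y : ℝ => (1 + y ^ 2)⁻¹),
    integral_univ_inv_one_add_sq, abs_of_pos ha, smul_eq_mul]
  field_simp

lemma integral_univ_inv_mul_sq_add_sq {a b : ℝ} (ha : 0 < a) (hb : 0 < b) (hab : a ≠ b) :
    ∫ x : ℝ, ((x ^ 2 + a ^ 2) * (x ^ 2 + b ^ 2))⁻¹ = π / (a * b * (a + b)) := by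
  have hab2 : b ^ 2 - a ^ 2 ≠ 0 := fun h => hab (by nlinarith)
  have hpf (x : ℝ) : ((x ^ 2 + a ^ 2) * (x ^ 2 + b ^ 2))⁻¹ =
      (b ^ 2 - a ^ 2)⁻¹ * ((x ^ 2 + a ^ 2)⁻¹ - (x ^ 2 + b ^ 2)⁻¹) := by
    have : x ^ 2 + a ^ 2 ≠ 0 := by positivity
    have : x ^ 2 + b ^ 2 ≠ 0 := by positivity
    field_simp
    ring
  simp_rw [hpf]
  rw [integral_const_mul, integral_sub (integrable_inv_sq_add_sq ha.ne')
    (integrable_inv_sq_add_sq hb.ne'), integral_univ_inv_sq_add_sq ha,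
    integral_univ_inv_sq_add_sq hb]
  field_simp
  ring

lemma integrable_uncurry_of_norm_le_mul {α β E : Type*} [MeasurableSpace α] [MeasurableSpace β]
    [NormedAddCommGroup E] {μ : Measure α} {ν : Measure β} [SFinite ν] {s : Set α}
    (hs : MeasurableSet s) {g : α → β → E} {u : α → ℝ} {v : β → ℝ}
    (hg : AEStronglyMeasurable (Function.uncurry g) ((μ.restrict s).prod ν))
    (hu : IntegrableOn u s μ) (hv : Integrable v ν) (hle : ∀ x ∈ s, ∀ y, ‖g x y‖ ≤ u x * v y) :
    Integrable (Function.uncurry g) ((μ.restrict s).prod ν) := by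
  refine Integrable.mono' (hu.mul_prod hv) hg ?_
  filter_upwards [Measure.quasiMeasurePreserving_fst.ae (ae_restrict_mem hs)] with p hp
  exact hle p.1 hp p.2

lemma hasDerivAt_log_sq_add_sq (x : ℝ) {a : ℝ} (ha : a ≠ 0) :
    HasDerivAt (fun a : ℝ => log (x ^ 2 + a ^ 2)) (2 * a / (x ^ 2 + a ^ 2)) a := by
  have h : HasDerivAt (fun a : ℝ => x ^ 2 + a ^ 2) (2 * a) a := by
    simpa using (hasDerivAt_pow 2 a).const_add (x ^ 2)
  exact h.log (by positivity)

lemma integral_log_sub_log_div_sq_add_sq {p q j : ℝ} (hp : 0 < p) (hq : 0 < q) (hj : 0 < j) :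
    ∫ x : ℝ, (log (x ^ 2 + q ^ 2) - log (x ^ 2 + p ^ 2)) / (x ^ 2 + j ^ 2) =
      2 * π / j * (log (q + j) - log (p + j)) := by
  have hpos : ∀ a ∈ uIcc p q, 0 < a := fun a ha => (lt_min hp hq).trans_le ha.1
  set G : ℝ → ℝ → ℝ := fun a x => 2 * a / (x ^ 2 + a ^ 2) / (x ^ 2 + j ^ 2)
  have hftc (x : ℝ) : (log (x ^ 2 + q ^ 2) - log (x ^ 2 + p ^ 2)) / (x ^ 2 + j ^ 2) =
      ∫ a in p..q, G a x := by
    rw [intervalIntegral.integral_div, intervalIntegral.integral_eq_sub_of_hasDerivAt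
      (fun a ha => hasDerivAt_log_sq_add_sq x (hpos a ha).ne')]
    refine ContinuousOn.intervalIntegrable fun a ha => ContinuousAt.continuousWithinAt ?_
    have := hpos a ha
    exact ContinuousAt.div (by fun_prop) (by fun_prop) (by positivity)
  have hG : Integrable (Function.uncurry G) ((volume.restrict (uIoc p q)).prod volume) := by
    refine integrable_uncurry_of_norm_le_mul measurableSet_uIoc (by fun_prop)
      (integrableOn_const measure_Ioc_lt_top.ne (C := 2 / min p q))
      (integrable_inv_sq_add_sq hj.ne') fun a ha x => ?_
    have ha0 := hpos a (uIoc_subset_uIcc ha)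
    have hmin : min p q ≤ a := (uIoc_subset_uIcc ha).1
    simp only [G]
    rw [norm_of_nonneg (by positivity), div_eq_mul_inv _ (x ^ 2 + j ^ 2)]
    refine mul_le_mul_of_nonneg_right ?_ (by positivity)
    rw [div_le_div_iff₀ (by positivity) (by positivity)]
    nlinarith [sq_nonneg x, mul_le_mul_of_nonneg_left hmin ha0.le]
  -- partial fractions need `a ≠ j`, which fails only on a null set
  have hinner : ∀ᵐ a, a ∈ uIoc p q → ∫ x, G a x = 2 * π / j * (a + j)⁻¹ := by
    filter_upwards [compl_mem_ae_iff.2 (measure_singleton j)] with a hne ha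
    have ha0 := hpos a (uIoc_subset_uIcc ha)
    have (x : ℝ) : G a x = 2 * a * ((x ^ 2 + a ^ 2) * (x ^ 2 + j ^ 2))⁻¹ := by
      simp only [G, div_eq_mul_inv, mul_inv, mul_assoc]
    simp_rw [this]
    rw [integral_const_mul, integral_univ_inv_mul_sq_add_sq ha0 hj hne]
    field_simp
  calc ∫ x, (log (x ^ 2 + q ^ 2) - log (x ^ 2 + p ^ 2)) / (x ^ 2 + j ^ 2)
      = ∫ x, ∫ a in p..q, G a x := by simp_rw [hftc]
    _ = ∫ a in p..q, ∫ x, G a x := (intervalIntegral_integral_swap hG).symm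
    _ = ∫ a in p..q, 2 * π / j * (a + j)⁻¹ := intervalIntegral.integral_congr_ae hinner
    _ = 2 * π / j * (log (q + j) - log (p + j)) := by
      rw [intervalIntegral.integral_const_mul, intervalIntegral.integral_comp_add_right
        (fun a => a⁻¹), integral_inv_of_pos (by positivity) (by positivity),
        log_div (by positivity) (by positivity)]

lemma integrable_inv_mul_exp_sub_exp_div {c j : ℝ} (hc : c ≠ 0) (hj : j ≠ 0) :
    Integrable (Function.uncurry fun t l : ℝ =>
        t⁻¹ * ((exp (-t * (l ^ 2 + c ^ 2)) - exp (-t * (l ^ 2 + j ^ 2))) / (l ^ 2 + j ^ 2)))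
      ((volume.restrict (Ioi 0)).prod volume) := by
  have hm : 0 < min (c ^ 2) (j ^ 2) := lt_min (by positivity) (by positivity)
  refine integrable_uncurry_of_norm_le_mul measurableSet_Ioi (by fun_prop)
    ((exp_neg_integrableOn_Ioi 0 hm).const_mul |c ^ 2 - j ^ 2|)
    (integrable_inv_sq_add_sq hj) fun t ht l => ?_
  have hbound := norm_inv_mul_exp_sub_exp_le (A := l ^ 2 + c ^ 2) (B := l ^ 2 + j ^ 2)
    (m := min (c ^ 2) (j ^ 2)) ht
    ((min_le_left _ _).trans (by nlinarith [sq_nonneg l]))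
    ((min_le_right _ _).trans (by nlinarith [sq_nonneg l]))
  rw [add_sub_add_left_eq_sub] at hbound
  rw [← mul_div_assoc, norm_div, div_eq_mul_inv,
    norm_of_nonneg (by positivity : 0 ≤ l ^ 2 + j ^ 2), neg_mul (min _ _)]
  exact mul_le_mul_of_nonneg_right hbound (by positivity)

/-- From the proof of Lemma `Ratcontr`: for `c, j > 0`,
`(j/π) ∫₀^∞ t⁻¹ ∫_ℝ (e^{-t(λ²+c²)} - e^{-t(λ²+j²)})/(λ²+j²) dλ dt = -2 log(c+j) + 2 log(2j)`. -/
theorem stmt8 (c j : ℝ) (hc : 0 < c) (hj : 0 < j) :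
    MeasureTheory.IntegrableOn
      (fun t : ℝ => t⁻¹ * ∫ l : ℝ,
        (Real.exp (-t * (l ^ 2 + c ^ 2)) - Real.exp (-t * (l ^ 2 + j ^ 2))) / (l ^ 2 + j ^ 2))
      (Set.Ioi 0) ∧
    (j / Real.pi) * (∫ t in Set.Ioi (0:ℝ), t⁻¹ * ∫ l : ℝ,
        (Real.exp (-t * (l ^ 2 + c ^ 2)) - Real.exp (-t * (l ^ 2 + j ^ 2))) / (l ^ 2 + j ^ 2)) =
      -2 * Real.log (c + j) + 2 * Real.log (2 * j) := by
  have hF := integrable_inv_mul_exp_sub_exp_div hc.ne' hj.ne'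
  simp_rw [← integral_const_mul (_⁻¹ : ℝ)]
  refine ⟨hF.integral_prod_left, ?_⟩
  have hinner (l : ℝ) : ∫ t in Ioi 0,
      t⁻¹ * ((exp (-t * (l ^ 2 + c ^ 2)) - exp (-t * (l ^ 2 + j ^ 2))) / (l ^ 2 + j ^ 2)) =
        (log (l ^ 2 + j ^ 2) - log (l ^ 2 + c ^ 2)) / (l ^ 2 + j ^ 2) := by
    simp_rw [← mul_div_assoc]
    rw [integral_div, integral_Ioi_inv_mul_exp_sub_exp (by positivity) (by positivity)]
  rw [integral_integral_swap hF]
  simp_rw [hinner]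
  rw [integral_log_sub_log_div_sq_add_sq hc hj hj, ← two_mul]
  field_simp
  ring
end

section
/- Let c > 0, N ∈ ℕ, and let P(λ) = Σ_{k=0}^N a_k λ^{2k} be an even polynomial with complex coefficients. Then: (i) for every s ∈ ℂ with Re(s) > N + 1/2 the integral E(s) := ∫₀^∞ t^{s−1} e^{−tc²} ( ∫_ℝ e^{−tλ²} P(iλ) dλ ) dt converges and E(s) = Σ_{k=0}^N (−1)^k a_k Γ(k + 1/2) Γ(s − k − 1/2) c^{2k+1−2s}; (ii) the right-hand side is holomorphic at s = 0 and its value there satisfies Σ_{k=0}^N (−1)^k a_k Γ(k + 1/2) Γ(−k − 1/2) c^{2k+1} = −2π ∫₀^c P(λ) dλ. -/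
/-!
The Gaussian moments `∫ e^{-tλ²} λ^{2k} dλ = Γ(k + 1/2) t^{-k-1/2}` turn the inner integral into
a finite sum of powers of `t`, so the Mellin transform splits into Gamma integrals
`∫₀^∞ t^{s-k-3/2} e^{-tc²} dt = Γ(s - k - 1/2) c^{2k+1-2s}`, convergent for `Re s > N + 1/2`.
At `s = 0` no Gamma factor sits at a pole, and the reflection formula gives
`Γ(k + 1/2) Γ(-k - 1/2) = (-1)^{k+1} 2π / (2k + 1)`, which turns the `k`-th term into
`-2π a_k ∫₀^c λ^{2k} dλ`.
-/

open MeasureTheory Real Set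

theorem Real.Gamma_nat_add_half_mul_Gamma_neg_nat_sub_half (k : ℕ) :
    Gamma (k + 1 / 2) * Gamma (-k - 1 / 2) = (-1) ^ (k + 1) * (2 * π) / (2 * k + 1) := by
  have reflection := Gamma_mul_Gamma_one_sub (-k - 1 / 2)
  have hsin : sin (π * (-k - 1 / 2)) = (-1) ^ (k + 1) := by
    rw [show π * (-k - 1 / 2) = -(k * π + π / 2) by ring, sin_neg, sin_add_pi_div_two,
      cos_nat_mul_pi, pow_succ, mul_neg_one]
  have hshift : Gamma (1 - (-k - 1 / 2)) = (k + 1 / 2) * Gamma (k + 1 / 2) := by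
    rw [show 1 - (-k - 1 / 2 : ℝ) = (k + 1 / 2) + 1 by ring]
    exact Gamma_add_one (by positivity)
  have hsign : ((-1 : ℝ) ^ (k + 1)) ^ 2 = 1 := by rw [← pow_mul, pow_mul']; simp
  rw [hsin, hshift, eq_div_iff (pow_ne_zero _ (by norm_num))] at reflection
  rw [eq_div_iff (by positivity)]
  linear_combination 2 * (-1 : ℝ) ^ (k + 1) * reflection
    - Gamma (k + 1 / 2) * Gamma (-k - 1 / 2) * (2 * k + 1) * hsign

theorem integrable_pow_mul_exp_neg_mul_sq {b : ℝ} (hb : 0 < b) (n : ℕ) :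
    Integrable fun x : ℝ => x ^ n * exp (-b * x ^ 2) := by
  simpa only [rpow_natCast] using
    integrable_rpow_mul_exp_neg_mul_sq hb (s := n) (neg_one_lt_zero.trans_le n.cast_nonneg)

theorem integral_pow_two_mul_mul_exp_neg_mul_sq {b : ℝ} (hb : 0 < b) (k : ℕ) :
    ∫ x : ℝ, x ^ (2 * k) * exp (-b * x ^ 2) = Gamma (k + 1 / 2) * b ^ (-(k + 1 / 2 : ℝ)) := by
  have heven := integral_comp_abs (f := fun x : ℝ => (x ^ 2) ^ k * exp (-b * x ^ 2))
  simp only [sq_abs, ← pow_mul] at heven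
  rw [heven]
  have hrpow : ∀ x ∈ Ioi (0 : ℝ),
      x ^ (2 * k) * exp (-b * x ^ 2) = x ^ ((2 * k : ℕ) : ℝ) * exp (-b * x ^ (2 : ℝ)) := by
    intro x _
    rw [rpow_natCast, rpow_two]
  rw [setIntegral_congr_fun measurableSet_Ioi hrpow,
    integral_rpow_mul_exp_neg_mul_rpow two_pos (neg_one_lt_zero.trans_le (Nat.cast_nonneg _)) hb]
  push_cast
  rw [show (2 * k + 1 : ℝ) / 2 = k + 1 / 2 by ring, show -(2 * k + 1 : ℝ) / 2 = -(k + 1 / 2) by ring]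
  ring

theorem integrableOn_cpow_mul_exp_neg_mul_Ioi {a : ℂ} (ha : 0 < a.re) {r : ℝ} (hr : 0 < r) :
    IntegrableOn (fun t : ℝ => (t : ℂ) ^ (a - 1) * Complex.exp (-(r * t))) (Ioi 0) := by
  have h := Complex.GammaIntegral_convergent ha
  rw [← mul_zero r, ← integrableOn_Ioi_comp_mul_left_iff _ _ hr] at h
  refine IntegrableOn.congr_fun (h.const_mul ((r : ℂ) ^ (a - 1))⁻¹) (fun t (ht : 0 < t) => ?_)
    measurableSet_Ioi
  have hr' : (r : ℂ) ^ (a - 1) ≠ 0 := by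
    simp [Complex.cpow_eq_zero_iff, hr.ne']
  push_cast
  rw [Complex.mul_cpow_ofReal_nonneg hr.le ht.le]
  field_simp

theorem exp_neg_mul_sq_mul_I_mul_pow (b x : ℝ) (k : ℕ) :
    (exp (-b * x ^ 2) : ℂ) * (Complex.I * x) ^ (2 * k)
      = (-1) ^ k * ((x ^ (2 * k) * exp (-b * x ^ 2) : ℝ) : ℂ) := by
  rw [mul_pow, pow_mul Complex.I, Complex.I_sq]
  push_cast
  ring

theorem integrable_exp_neg_mul_sq_mul_I_mul_pow {b : ℝ} (hb : 0 < b) (k : ℕ) :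
    Integrable fun x : ℝ => (exp (-b * x ^ 2) : ℂ) * (Complex.I * x) ^ (2 * k) := by
  simp only [exp_neg_mul_sq_mul_I_mul_pow]
  exact (integrable_pow_mul_exp_neg_mul_sq hb _).ofReal.const_mul _

theorem integral_exp_neg_mul_sq_mul_I_mul_pow {b : ℝ} (hb : 0 < b) (k : ℕ) :
    ∫ x : ℝ, (exp (-b * x ^ 2) : ℂ) * (Complex.I * x) ^ (2 * k)
      = (-1) ^ k * Gamma (k + 1 / 2) * (b : ℂ) ^ (-(k + 1 / 2 : ℂ)) := by
  simp only [exp_neg_mul_sq_mul_I_mul_pow]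
  rw [integral_const_mul, integral_complex_ofReal, integral_pow_two_mul_mul_exp_neg_mul_sq hb,
    Complex.ofReal_mul, Complex.ofReal_cpow hb.le]
  push_cast
  ring

theorem integral_exp_neg_mul_sq_mul_sum_I_mul_pow {b : ℝ} (hb : 0 < b) (S : Finset ℕ)
    (a : ℕ → ℂ) :
    ∫ x : ℝ, (exp (-b * x ^ 2) : ℂ) * ∑ k ∈ S, a k * (Complex.I * x) ^ (2 * k)
      = ∑ k ∈ S, (-1) ^ k * a k * Gamma (k + 1 / 2) * (b : ℂ) ^ (-(k + 1 / 2 : ℂ)) := by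
  simp only [Finset.mul_sum, mul_left_comm _ (a _)]
  rw [integral_finsetSum _ fun k _ => (integrable_exp_neg_mul_sq_mul_I_mul_pow hb k).const_mul _]
  refine Finset.sum_congr rfl fun k _ => ?_
  rw [integral_const_mul, integral_exp_neg_mul_sq_mul_I_mul_pow hb]
  ring

theorem integral_cpow_mul_exp_neg_sq_mul_Ioi {a : ℂ} (ha : 0 < a.re) {c : ℝ} (hc : 0 < c) :
    ∫ t : ℝ in Ioi 0, (t : ℂ) ^ (a - 1) * Complex.exp (-((c ^ 2 : ℝ) * t))
      = Complex.Gamma a * (c : ℂ) ^ (-2 * a) := by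
  rw [Complex.integral_cpow_mul_exp_neg_mul_Ioi ha (pow_pos hc 2), mul_comm,
    show -2 * a = ((-2 : ℝ) : ℂ) * a by push_cast; ring,
    Complex.cpow_mul_ofReal_nonneg hc.le, rpow_neg hc.le, rpow_two]
  push_cast
  rw [one_div]

theorem cpow_mul_exp_mul_integral_exp_neg_mul_sq_mul_sum {t : ℝ} (ht : 0 < t) (c : ℝ) (s : ℂ)
    (S : Finset ℕ) (a : ℕ → ℂ) :
    (t : ℂ) ^ (s - 1) * (exp (-t * c ^ 2) : ℂ) *
        ∫ l : ℝ, (exp (-t * l ^ 2) : ℂ) * ∑ k ∈ S, a k * (Complex.I * l) ^ (2 * k)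
      = ∑ k ∈ S, (-1) ^ k * a k * Gamma (k + 1 / 2) *
          ((t : ℂ) ^ (s - k - 1 / 2 - 1) * Complex.exp (-((c ^ 2 : ℝ) * t))) := by
  rw [integral_exp_neg_mul_sq_mul_sum_I_mul_pow ht, Finset.mul_sum]
  refine Finset.sum_congr rfl fun k _ => ?_
  rw [show s - k - 1 / 2 - 1 = (s - 1) + -(k + 1 / 2) by ring,
    Complex.cpow_add _ _ (Complex.ofReal_ne_zero.2 ht.ne'), Complex.ofReal_exp,
    show (-t * c ^ 2 : ℝ) = -(c ^ 2 * t) by ring]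
  push_cast
  ring

theorem differentiableAt_Gamma_sub_nat_sub_half (k : ℕ) :
    DifferentiableAt ℂ (fun s : ℂ => Complex.Gamma (s - k - 1 / 2)) 0 := by
  refine (Complex.differentiableAt_Gamma _ fun m hm => ?_).comp 0 (by fun_prop)
  have hparity : ((2 * m : ℕ) : ℂ) = (2 * k + 1 : ℕ) := by
    push_cast
    linear_combination 2 * hm
  have := Nat.cast_injective hparity
  omega

theorem sum_Gamma_mul_Gamma_mul_pow_eq_integral (c : ℝ) (S : Finset ℕ) (a : ℕ → ℂ) :
    ∑ k ∈ S, (-1 : ℂ) ^ k * a k * (Gamma (k + 1 / 2) : ℂ) * (Gamma (-k - 1 / 2) : ℂ) *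
        (c : ℂ) ^ (2 * k + 1)
      = -2 * (π : ℂ) * ∫ l in (0 : ℝ)..c, ∑ k ∈ S, a k * (l : ℂ) ^ (2 * k) := by
  rw [intervalIntegral.integral_finsetSum fun k _ => (by fun_prop : Continuous
    fun l : ℝ => a k * (l : ℂ) ^ (2 * k)).intervalIntegrable 0 c, Finset.mul_sum]
  refine Finset.sum_congr rfl fun k _ => ?_
  have hmonomial : ∫ l in (0 : ℝ)..c, (l : ℂ) ^ (2 * k) = c ^ (2 * k + 1) / (2 * k + 1) := by
    simp only [← Complex.ofReal_pow, intervalIntegral.integral_ofReal, integral_pow]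
    push_cast
    ring
  have hGamma := congrArg ((↑) : ℝ → ℂ) (Gamma_nat_add_half_mul_Gamma_neg_nat_sub_half k)
  push_cast at hGamma
  have hsign : (-1 : ℂ) ^ k * (-1) ^ (k + 1) = -1 := by
    rw [← pow_add]
    exact Odd.neg_one_pow ⟨k, by ring⟩
  rw [intervalIntegral.integral_const_mul, hmonomial]
  linear_combination (-1) ^ k * a k * c ^ (2 * k + 1) * hGamma
    + 2 * π * a k * c ^ (2 * k + 1) / (2 * k + 1) * hsign

/-- Lemma `l2tor2` (after Fried), with explicit coefficients: for `c > 0` and the even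
polynomial `P(z) = Σ_{k≤N} a_k z^{2k}`, the Mellin transform
`E(s) = ∫₀^∞ t^{s-1} e^{-tc²} ∫_ℝ e^{-tλ²} P(iλ) dλ dt` converges for `Re s > N + 1/2` and
equals `Σ_k (-1)^k a_k Γ(k+1/2) Γ(s-k-1/2) c^{2k+1-2s}`; this expression is holomorphic at
`s = 0` and its value there is `-2π ∫₀^c P(λ) dλ`. -/
theorem stmt11 (c : ℝ) (hc : 0 < c) (N : ℕ) (a : ℕ → ℂ) :
    (∀ s : ℂ, (N : ℝ) + 1/2 < s.re →
      MeasureTheory.IntegrableOn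
        (fun t : ℝ => (t : ℂ) ^ (s - 1) * (Real.exp (-t * c ^ 2) : ℂ) *
          ∫ l : ℝ, (Real.exp (-t * l ^ 2) : ℂ) *
            ∑ k ∈ Finset.range (N+1), a k * (Complex.I * l) ^ (2*k)) (Set.Ioi 0) ∧
      (∫ t in Set.Ioi (0:ℝ), (t : ℂ) ^ (s - 1) * (Real.exp (-t * c ^ 2) : ℂ) *
          ∫ l : ℝ, (Real.exp (-t * l ^ 2) : ℂ) *
            ∑ k ∈ Finset.range (N+1), a k * (Complex.I * l) ^ (2*k)) =
        ∑ k ∈ Finset.range (N+1), (-1 : ℂ) ^ k * a k * (Real.Gamma ((k:ℝ) + 1/2) : ℂ) *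
          Complex.Gamma (s - k - 1/2) * (c : ℂ) ^ ((2*(k:ℂ)+1) - 2*s)) ∧
    DifferentiableAt ℂ (fun s : ℂ =>
      ∑ k ∈ Finset.range (N+1), (-1 : ℂ) ^ k * a k * (Real.Gamma ((k:ℝ) + 1/2) : ℂ) *
        Complex.Gamma (s - k - 1/2) * (c : ℂ) ^ ((2*(k:ℂ)+1) - 2*s)) 0 ∧
    (∑ k ∈ Finset.range (N+1), (-1 : ℂ) ^ k * a k * (Real.Gamma ((k:ℝ) + 1/2) : ℂ) *
        (Real.Gamma (-(k:ℝ) - 1/2) : ℂ) * (c : ℂ) ^ (2*k+1)) =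
      -2 * (Real.pi : ℂ) *
        ∫ l in (0:ℝ)..c, ∑ k ∈ Finset.range (N+1), a k * (l : ℂ) ^ (2*k) := by
  refine ⟨fun s hs => ?_, ?_, sum_Gamma_mul_Gamma_mul_pow_eq_integral c _ a⟩
  · have hre : ∀ k ∈ Finset.range (N + 1), 0 < (s - k - 1 / 2).re := fun k hk => by
      have : (k : ℝ) ≤ N := by exact_mod_cast Finset.mem_range_succ_iff.mp hk
      simp only [Complex.sub_re, Complex.natCast_re, Complex.div_ofNat_re, Complex.one_re]
      linarith
    have hintegrable : ∀ k ∈ Finset.range (N + 1), IntegrableOn (fun t : ℝ =>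
        (-1) ^ k * a k * Gamma (k + 1 / 2) *
          ((t : ℂ) ^ (s - k - 1 / 2 - 1) * Complex.exp (-((c ^ 2 : ℝ) * t)))) (Ioi 0) :=
      fun k hk => (integrableOn_cpow_mul_exp_neg_mul_Ioi (hre k hk) (pow_pos hc 2)).const_mul _
    have hintegrand := fun t (ht : t ∈ Ioi 0) =>
      cpow_mul_exp_mul_integral_exp_neg_mul_sq_mul_sum (mem_Ioi.mp ht) c s (Finset.range (N + 1)) a
    refine ⟨IntegrableOn.congr_fun (integrable_finsetSum _ hintegrable)
      (fun t ht => (hintegrand t ht).symm) measurableSet_Ioi, ?_⟩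
    rw [setIntegral_congr_fun measurableSet_Ioi hintegrand, integral_finsetSum _ hintegrable]
    refine Finset.sum_congr rfl fun k hk => ?_
    rw [integral_const_mul, integral_cpow_mul_exp_neg_sq_mul_Ioi (hre k hk) hc,
      show -2 * (s - k - 1 / 2) = 2 * (k : ℂ) + 1 - 2 * s by ring]
    ring
  · exact DifferentiableAt.fun_sum fun k _ =>
      ((differentiableAt_Gamma_sub_nat_sub_half k).const_mul _).mul
        ((by fun_prop : DifferentiableAt ℂ (fun s : ℂ => 2 * (k : ℂ) + 1 - 2 * s) 0).const_cpow
          (Or.inl (Complex.ofReal_ne_zero.2 hc.ne')))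
end

section
/- Let n ≥ 1 and set ρ_j := n + 1 − j for j = 1, …, n+1. Let τ_1 ≥ τ_2 ≥ … ≥ τ_n ≥ |τ_{n+1}| be real numbers and let k_2, …, k_{n+1} be real numbers with |k_j| ≤ τ_{j−1} + 1 for j = 2, …, n+1. Then Σ_{j=1}^{n+1} (τ_j + ρ_j)² − Σ_{j=2}^{n+1} (k_j + ρ_j)² ≥ τ_{n+1}². If moreover k_{n+1} = 0, then Σ_{j=1}^{n+1} (τ_j + ρ_j)² − Σ_{j=2}^{n+1} (k_j + ρ_j)² ≥ (τ_n + 1)² + τ_{n+1}². -/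
open Finset

/- Both inequalities come from comparing the two sums term by term after shifting the index
of the second one: `(k_{j+1} + ρ_{j+1})² ≤ (τ_j + ρ_j)²` because `ρ_j = ρ_{j+1} + 1`.
What is left over are the top terms `(τ_{n+1} + ρ_{n+1})² = τ_{n+1}²` and, when
`k_{n+1} = 0`, also `(τ_n + ρ_n)² = (τ_n + 1)²`. -/

lemma sq_add_le_sq_add_add_one {x t r : ℝ} (hr : 0 ≤ r) (hx : |x| ≤ t + 1) :
    (x + r) ^ 2 ≤ (t + (r + 1)) ^ 2 := by
  rw [abs_le] at hx
  exact sq_le_sq' (by linarith) (by linarith)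

lemma sum_Icc_two_succ_eq {M : Type*} [AddCommMonoid M] (f : ℕ → M) (N : ℕ) :
    ∑ j ∈ Icc 2 (N + 1), f j = ∑ j ∈ Icc 1 N, f (j + 1) := by
  rw [← map_add_right_Icc 1 N 1, sum_map]
  rfl

lemma sum_shifted_sq_le (τ k : ℕ → ℝ) {N : ℕ} {c : ℝ} (hc : (N : ℝ) + 1 ≤ c)
    (hk : ∀ j ∈ Icc 1 N, |k (j + 1)| ≤ τ j + 1) :
    ∑ j ∈ Icc 2 (N + 1), (k j + (c - j)) ^ 2 ≤ ∑ j ∈ Icc 1 N, (τ j + (c - j)) ^ 2 := by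
  rw [sum_Icc_two_succ_eq]
  refine sum_le_sum fun j hj => ?_
  have hjN : (j : ℝ) ≤ N := by exact_mod_cast (mem_Icc.mp hj).2
  have h := sq_add_le_sq_add_add_one (r := c - j - 1) (by linarith) (hk j hj)
  push_cast
  rwa [sub_add_cancel, sub_sub] at h

theorem stmt13_general (n : ℕ) (hn : 1 ≤ n) (τ k : ℕ → ℝ)
    (hk : ∀ j, 2 ≤ j → j ≤ n+1 → |k j| ≤ τ (j-1) + 1) :
    τ (n+1) ^ 2 ≤
      (∑ j ∈ Finset.Icc 1 (n+1), (τ j + ((n:ℝ) + 1 - j)) ^ 2) -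
        ∑ j ∈ Finset.Icc 2 (n+1), (k j + ((n:ℝ) + 1 - j)) ^ 2 ∧
    (k (n+1) = 0 →
      (τ n + 1) ^ 2 + τ (n+1) ^ 2 ≤
        (∑ j ∈ Finset.Icc 1 (n+1), (τ j + ((n:ℝ) + 1 - j)) ^ 2) -
          ∑ j ∈ Finset.Icc 2 (n+1), (k j + ((n:ℝ) + 1 - j)) ^ 2) := by
  have hk' : ∀ j ∈ Icc 1 n, |k (j + 1)| ≤ τ j + 1 := fun j hj => by
    simpa using hk (j + 1) (by grind) (by grind)
  rw [sum_Icc_succ_top (by omega : 1 ≤ n + 1)]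
  have hτtop : (τ (n + 1) + ((n : ℝ) + 1 - (n + 1 : ℕ))) ^ 2 = τ (n + 1) ^ 2 := by
    push_cast; ring
  refine ⟨by linarith [sum_shifted_sq_le τ k le_rfl hk'], fun hk0 => ?_⟩
  obtain ⟨m, rfl⟩ := Nat.exists_eq_add_of_le' hn
  rw [sum_Icc_succ_top (by omega : 1 ≤ m + 1), sum_Icc_succ_top (by omega : 2 ≤ m + 1 + 1), hk0]
  have hshift := sum_shifted_sq_le τ k (N := m) (c := ((m + 1 : ℕ) : ℝ) + 1) (by push_cast; linarith)
    fun j hj => hk' j (by grind)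
  have hτm : (τ (m + 1) + (((m + 1 : ℕ) : ℝ) + 1 - (m + 1 : ℕ))) ^ 2 = (τ (m + 1) + 1) ^ 2 := by
    ring
  have hktop : ((0 : ℝ) + (((m + 1 : ℕ) : ℝ) + 1 - (m + 1 + 1 : ℕ))) ^ 2 = 0 := by
    push_cast; ring
  linarith

/-- Arithmetic core of Lemma 7.1(2) for `G = Spin(2n+1,1)`, with `ρ_j = n+1-j`:
if `τ_1 ≥ … ≥ τ_n ≥ |τ_{n+1}|` and `|k_j| ≤ τ_{j-1}+1`, then
`Σ_{j=1}^{n+1}(τ_j+ρ_j)² - Σ_{j=2}^{n+1}(k_j+ρ_j)² ≥ τ_{n+1}²`, and if moreover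
`k_{n+1} = 0` then it is `≥ (τ_n+1)² + τ_{n+1}²`. -/
theorem stmt13 (n : ℕ) (hn : 1 ≤ n) (τ k : ℕ → ℝ)
    (hτ : ∀ j, 1 ≤ j → j + 1 ≤ n → τ (j+1) ≤ τ j)
    (hτn : |τ (n+1)| ≤ τ n)
    (hk : ∀ j, 2 ≤ j → j ≤ n+1 → |k j| ≤ τ (j-1) + 1) :
    τ (n+1) ^ 2 ≤
      (∑ j ∈ Finset.Icc 1 (n+1), (τ j + ((n:ℝ) + 1 - j)) ^ 2) -
        ∑ j ∈ Finset.Icc 2 (n+1), (k j + ((n:ℝ) + 1 - j)) ^ 2 ∧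
    (k (n+1) = 0 →
      (τ n + 1) ^ 2 + τ (n+1) ^ 2 ≤
        (∑ j ∈ Finset.Icc 1 (n+1), (τ j + ((n:ℝ) + 1 - j)) ^ 2) -
          ∑ j ∈ Finset.Icc 2 (n+1), (k j + ((n:ℝ) + 1 - j)) ^ 2) :=
  stmt13_general n hn τ k hk
end

section
/- Let n ≥ 1 and set ρ_j := n + 1 − j for j = 2, …, n+1. For each j = 2, …, n+1 let a_j, b_j be integers with 0 ≤ a_j ≤ b_j. Define, for z ∈ ℂ, c(z) := Π_{j=2}^{n+1} [ Γ(iz − a_j − ρ_j) Γ(iz + a_j + ρ_j) ] / [ Γ(iz − b_j − ρ_j) Γ(iz + b_j + ρ_j + 1) ], where Γ is the complex Gamma function. Then for every real z ≠ 0 the function c is complex-differentiable at z, c(z) ≠ 0, and c′(z)/c(z) = Σ_{j=2}^{n+1} ( Σ_{l=a_j+1}^{b_j} i/(iz − l − ρ_j) − Σ_{l=a_j}^{b_j} i/(iz + l + ρ_j) ). -/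
/-!
For `Re w ≠ 0` every Gamma argument in `c(w)` lies off the real axis, so `Γ(s + 1) = s Γ(s)`
can be iterated freely: each Gamma quotient collapses to a rational function
`∏ (i w - l - ρ_j) / ∏ (i w + l + ρ_j)`, and `c` agrees with the product of these on a
neighbourhood of `z`. The logarithmic derivative of a product of linear factors `i w + c` is the
sum of the `i / (i w + c)`.
-/

open Finset

/-- The Gamma-quotient `c`-function of `Spin(2n+1,1)` (with `ρ_j = n+1-j`, `a_j = |k_j(σ)|`,
`b_j = k_j(ν)`). -/
noncomputable def cfun (n : ℕ) (a b : ℕ → ℕ) : ℂ → ℂ := fun z =>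
  ∏ j ∈ Finset.Icc 2 (n+1),
    (Complex.Gamma (Complex.I * z - (a j : ℂ) - (((n:ℝ) + 1 - j : ℝ) : ℂ)) *
      Complex.Gamma (Complex.I * z + (a j : ℂ) + (((n:ℝ) + 1 - j : ℝ) : ℂ))) /
    (Complex.Gamma (Complex.I * z - (b j : ℂ) - (((n:ℝ) + 1 - j : ℝ) : ℂ)) *
      Complex.Gamma (Complex.I * z + (b j : ℂ) + (((n:ℝ) + 1 - j : ℝ) : ℂ) + 1))

open Complex Topology

namespace Complex

theorem ne_zero_of_im_ne_zero {x : ℂ} (h : x.im ≠ 0) : x ≠ 0 :=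
  fun hx => h (by rw [hx, zero_im])

theorem Gamma_ne_zero_of_im_ne_zero {s : ℂ} (h : s.im ≠ 0) : Gamma s ≠ 0 :=
  Gamma_ne_zero fun m hm => h (by simp [hm])

theorem Gamma_sub_nat_eq_prod_mul_Gamma {s : ℂ} {m k : ℕ} (hmk : m ≤ k)
    (hs : ∀ l ∈ Icc (m + 1) k, s - l ≠ 0) :
    Gamma (s - m) = (∏ l ∈ Icc (m + 1) k, (s - l)) * Gamma (s - k) := by
  induction k, hmk using Nat.le_induction with
  | base => simp
  | succ k hmk ih =>
    have hk : s - (k + 1 : ℕ) ≠ 0 := hs _ (mem_Icc.2 ⟨by omega, le_rfl⟩)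
    rw [ih fun l hl => hs l (Icc_subset_Icc_right k.le_succ hl), prod_Icc_succ_top (by omega),
      mul_assoc, ← Gamma_add_one _ hk, Nat.cast_succ, sub_add_eq_sub_sub, sub_add_cancel]

theorem Gamma_add_nat_add_one_eq_prod_mul_Gamma {s : ℂ} {m k : ℕ} (hmk : m ≤ k)
    (hs : ∀ l ∈ Icc m k, s + l ≠ 0) :
    Gamma (s + k + 1) = (∏ l ∈ Icc m k, (s + l)) * Gamma (s + m) := by
  induction k, hmk using Nat.le_induction with
  | base => simp [Gamma_add_one _ (hs m (by simp))]
  | succ k hmk ih =>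
    have hk : s + (k + 1 : ℕ) ≠ 0 := hs _ (mem_Icc.2 ⟨by omega, le_rfl⟩)
    rw [Gamma_add_one _ hk, prod_Icc_succ_top (by omega), mul_comm _ (s + _), mul_assoc,
      ← ih fun l hl => hs l (Icc_subset_Icc_right k.le_succ hl), Nat.cast_succ, ← add_assoc]

end Complex

section RationalFactor

variable (ρ : ℝ) (m k : ℕ) {w : ℂ}

noncomputable def rationalFactor (w : ℂ) : ℂ :=
  (∏ l ∈ Icc (m + 1) k, (I * w - l - ρ)) / ∏ l ∈ Icc m k, (I * w + l + ρ)

variable {ρ m k}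

theorem I_mul_sub_sub_ne_zero (hw : w.re ≠ 0) (l : ℕ) : I * w - l - ρ ≠ 0 :=
  ne_zero_of_im_ne_zero (by simpa using hw)

theorem I_mul_add_add_ne_zero (hw : w.re ≠ 0) (l : ℕ) : I * w + l + ρ ≠ 0 :=
  ne_zero_of_im_ne_zero (by simpa using hw)

theorem Gamma_quotient_eq_rationalFactor (hw : w.re ≠ 0) (hmk : m ≤ k) :
    Gamma (I * w - m - ρ) * Gamma (I * w + m + ρ) /
        (Gamma (I * w - k - ρ) * Gamma (I * w + k + ρ + 1)) =
      rationalFactor ρ m k w := by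
  have hs := Gamma_sub_nat_eq_prod_mul_Gamma (s := I * w - ρ) hmk fun l _ => by
    simpa only [sub_right_comm] using I_mul_sub_sub_ne_zero hw l
  have ht := Gamma_add_nat_add_one_eq_prod_mul_Gamma (s := I * w + ρ) hmk fun l _ => by
    simpa only [add_right_comm] using I_mul_add_add_ne_zero hw l
  have hΓs : Gamma (I * w - ρ - k) ≠ 0 := Gamma_ne_zero_of_im_ne_zero (by simpa using hw)
  have hΓt : Gamma (I * w + ρ + m) ≠ 0 := Gamma_ne_zero_of_im_ne_zero (by simpa using hw)
  rw [rationalFactor]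
  -- bring every argument into the shape `(I * w ∓ ρ) ∓ l` of the two shift formulas
  simp only [sub_right_comm _ _ (ρ : ℂ), add_right_comm _ _ (ρ : ℂ)] at hs ht ⊢
  rw [hs, ht]
  field_simp

theorem rationalFactor_ne_zero (hw : w.re ≠ 0) : rationalFactor ρ m k w ≠ 0 :=
  div_ne_zero (prod_ne_zero_iff.2 fun l _ => I_mul_sub_sub_ne_zero hw l)
    (prod_ne_zero_iff.2 fun l _ => I_mul_add_add_ne_zero hw l)

theorem differentiableAt_rationalFactor (hw : w.re ≠ 0) :
    DifferentiableAt ℂ (rationalFactor ρ m k) w :=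
  (DifferentiableAt.fun_finsetProd fun _ _ => by fun_prop).div
    (DifferentiableAt.fun_finsetProd fun _ _ => by fun_prop)
    (prod_ne_zero_iff.2 fun l _ => I_mul_add_add_ne_zero hw l)

theorem logDeriv_I_mul_add (c x : ℂ) : logDeriv (fun w => I * w + c) x = I / (I * x + c) := by
  have h : HasDerivAt (fun w => I * w + c) I x := by
    simpa using ((hasDerivAt_id x).const_mul I).add_const c
  rw [logDeriv_apply, h.deriv]

theorem logDeriv_rationalFactor (hw : w.re ≠ 0) :
    logDeriv (rationalFactor ρ m k) w =
      (∑ l ∈ Icc (m + 1) k, I / (I * w - l - ρ)) - ∑ l ∈ Icc m k, I / (I * w + l + ρ) := by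
  have hsub (l : ℕ) : logDeriv (fun w => I * w - l - ρ) w = I / (I * w - l - ρ) := by
    simpa only [← sub_eq_add_neg, ← sub_sub] using logDeriv_I_mul_add (-(l + ρ)) w
  have hadd (l : ℕ) : logDeriv (fun w => I * w + l + ρ) w = I / (I * w + l + ρ) := by
    simpa only [add_assoc] using logDeriv_I_mul_add (l + ρ) w
  unfold rationalFactor
  rw [logDeriv_div w (prod_ne_zero_iff.2 fun l _ => I_mul_sub_sub_ne_zero hw l)
    (prod_ne_zero_iff.2 fun l _ => I_mul_add_add_ne_zero hw l)
    (DifferentiableAt.fun_finsetProd fun _ _ => by fun_prop)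
    (DifferentiableAt.fun_finsetProd fun _ _ => by fun_prop),
    logDeriv_prod (f := fun (l : ℕ) w => I * w - l - ρ) (fun l _ => I_mul_sub_sub_ne_zero hw l)
      (fun _ _ => by fun_prop),
    logDeriv_prod (f := fun (l : ℕ) w => I * w + l + ρ) (fun l _ => I_mul_add_add_ne_zero hw l)
      (fun _ _ => by fun_prop)]
  simp only [hsub, hadd]

end RationalFactor

theorem cfun_eqOn_prod_rationalFactor (n : ℕ) {a b : ℕ → ℕ} (hab : ∀ j, a j ≤ b j) :
    Set.EqOn (cfun n a b)
      (fun w => ∏ j ∈ Icc 2 (n + 1), rationalFactor ((n : ℝ) + 1 - j) (a j) (b j) w)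
      {w | w.re ≠ 0} :=
  fun _ hw => prod_congr rfl fun j _ => Gamma_quotient_eq_rationalFactor hw (hab j)

theorem stmt15_general (n : ℕ) (a b : ℕ → ℕ) (hab : ∀ j, a j ≤ b j)
    (z : ℝ) (hz : z ≠ 0) :
    DifferentiableAt ℂ (cfun n a b) (z : ℂ) ∧ cfun n a b (z : ℂ) ≠ 0 ∧
    deriv (cfun n a b) (z : ℂ) / cfun n a b (z : ℂ) =
      ∑ j ∈ Finset.Icc 2 (n+1),
        ((∑ l ∈ Finset.Icc (a j + 1) (b j),
            Complex.I / (Complex.I * z - (l : ℂ) - (((n:ℝ) + 1 - j : ℝ) : ℂ))) -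
          ∑ l ∈ Finset.Icc (a j) (b j),
            Complex.I / (Complex.I * z + (l : ℂ) + (((n:ℝ) + 1 - j : ℝ) : ℂ))) := by
  have hz' : (z : ℂ).re ≠ 0 := by simpa using hz
  have hc : cfun n a b =ᶠ[𝓝 (z : ℂ)] _ :=
    (cfun_eqOn_prod_rationalFactor n hab).eventuallyEq_of_mem
      ((isOpen_ne.preimage continuous_re).mem_nhds hz')
  have hne : ∀ j ∈ Icc 2 (n + 1), rationalFactor ((n : ℝ) + 1 - j) (a j) (b j) z ≠ 0 :=
    fun _ _ => rationalFactor_ne_zero hz'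
  have hdiff : ∀ j ∈ Icc 2 (n + 1),
      DifferentiableAt ℂ (rationalFactor ((n : ℝ) + 1 - j) (a j) (b j)) z :=
    fun _ _ => differentiableAt_rationalFactor hz'
  refine ⟨(DifferentiableAt.fun_finsetProd hdiff).congr_of_eventuallyEq hc,
    hc.eq_of_nhds ▸ prod_ne_zero_iff.2 hne, ?_⟩
  rw [hc.deriv_eq, hc.eq_of_nhds, ← logDeriv_apply, logDeriv_prod hne hdiff]
  exact sum_congr rfl fun j _ => logDeriv_rationalFactor hz'

/-- Identity `(Glcfnktn)`: for real `z ≠ 0` the `c`-function is differentiable and nonzero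
at `z`, and its logarithmic derivative is the displayed sum of simple fractions. -/
theorem stmt15 (n : ℕ) (hn : 1 ≤ n) (a b : ℕ → ℕ) (hab : ∀ j, a j ≤ b j)
    (z : ℝ) (hz : z ≠ 0) :
    DifferentiableAt ℂ (cfun n a b) (z : ℂ) ∧ cfun n a b (z : ℂ) ≠ 0 ∧
    deriv (cfun n a b) (z : ℂ) / cfun n a b (z : ℂ) =
      ∑ j ∈ Finset.Icc 2 (n+1),
        ((∑ l ∈ Finset.Icc (a j + 1) (b j),
            Complex.I / (Complex.I * z - (l : ℂ) - (((n:ℝ) + 1 - j : ℝ) : ℂ))) -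
          ∑ l ∈ Finset.Icc (a j) (b j),
            Complex.I / (Complex.I * z + (l : ℂ) + (((n:ℝ) + 1 - j : ℝ) : ℂ))) :=
  stmt15_general n a b hab z hz
end

section
/- Let c > 0, h > 0 and C > 0, and let (ℓ_k)_{k∈ℕ} be a sequence of real numbers with ℓ_k ≥ c for all k and #{ k : ℓ_k ≤ R } ≤ C e^{hR} for every R > 0. Then for every t > 0 the series Σ_k e^{−ℓ_k²/(4t)} converges, and there exists a constant C′ > 0 such that Σ_k e^{−ℓ_k²/(4t)} ≤ C′ e^{−c²/(8t)} for all t ∈ (0,1]. -/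
/-!
Sort the `ℓ_k` into the shells `c + n ≤ ℓ_k < c + n + 1`. The `n`-th shell has at most
`C e^{h(c+n+1)}` members, each contributing at most `e^{-(c+n)²/(4t)}`, and the Gaussian factor
beats the exponential growth, so the series converges. For `t ≤ 1` and `c ≤ x`, half of
`x²/(4t)` is at least `c²/(8t)` and the other half at least `x²/8`, which splits off the factor
`e^{-c²/(8t)}` and leaves a majorant that no longer depends on `t`.
-/

open Real Set

section Shells

variable {ι : Type*} {ℓ : ι → ℝ} {c : ℝ} {g : ℝ → ℝ} {N : ℕ → ℝ}

lemma Finset.card_le_natCard_of_subset {α : Type*} {s : Finset α} {S : Set α}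
    (hsS : ↑s ⊆ S) (hS : S.Finite) : s.card ≤ Nat.card S := by
  rw [Nat.card_coe_set_eq, ← Set.ncard_coe_finset]
  exact Set.ncard_le_ncard hsS hS

lemma sum_le_tsum_of_shell_card_le (hl : ∀ k, c ≤ ℓ k) (hg : AntitoneOn g (Ici c))
    (hg0 : ∀ x ∈ Ici c, 0 ≤ g x)
    (hN : ∀ n : ℕ, {k | ℓ k ≤ c + n + 1}.Finite ∧ (Nat.card {k | ℓ k ≤ c + n + 1} : ℝ) ≤ N n)
    (hsum : Summable fun n : ℕ => N n * g (c + n)) (s : Finset ι) :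
    ∑ k ∈ s, g (ℓ k) ≤ ∑' n, N n * g (c + n) := by
  classical
  set shell : ι → ℕ := fun k => ⌊ℓ k - c⌋₊
  have mem_shell (k : ι) : c + shell k ≤ ℓ k ∧ ℓ k < c + shell k + 1 := by
    have := (Nat.floor_eq_iff (sub_nonneg.2 (hl k))).1 (rfl : shell k = _)
    constructor <;> linarith [this.1, this.2]
  have hc_le (n : ℕ) : c + n ∈ Ici c := by simp
  have hfiber (n : ℕ) : ∑ k ∈ s with shell k = n, g (ℓ k) ≤ N n * g (c + n) := by
    have hcard : ((s.filter (shell · = n)).card : ℝ) ≤ N n := by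
      refine le_trans ?_ (hN n).2
      refine mod_cast Finset.card_le_natCard_of_subset (fun k hk => ?_) (hN n).1
      obtain ⟨-, rfl⟩ := Finset.mem_filter.1 hk
      exact (mem_shell k).2.le
    calc ∑ k ∈ s with shell k = n, g (ℓ k)
        ≤ (s.filter (shell · = n)).card • g (c + n) := by
          refine Finset.sum_le_card_nsmul _ _ _ fun k hk => ?_
          obtain ⟨-, rfl⟩ := Finset.mem_filter.1 hk
          exact hg (hc_le _) (hl k) (mem_shell k).1
      _ ≤ N n * g (c + n) := by
          rw [nsmul_eq_mul]
          exact mul_le_mul_of_nonneg_right hcard (hg0 _ (hc_le n))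
  have hterm_nonneg (n : ℕ) : 0 ≤ N n * g (c + n) :=
    mul_nonneg ((Nat.cast_nonneg _).trans (hN n).2) (hg0 _ (hc_le n))
  calc ∑ k ∈ s, g (ℓ k) = ∑ n ∈ s.image shell, ∑ k ∈ s with shell k = n, g (ℓ k) :=
        (Finset.sum_fiberwise_of_maps_to (fun k hk => Finset.mem_image_of_mem shell hk) _).symm
    _ ≤ ∑ n ∈ s.image shell, N n * g (c + n) := Finset.sum_le_sum fun n _ => hfiber n
    _ ≤ ∑' n, N n * g (c + n) := hsum.sum_le_tsum _ fun n _ => hterm_nonneg n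

lemma summable_and_tsum_le_of_shell_card_le (hl : ∀ k, c ≤ ℓ k) (hg : AntitoneOn g (Ici c))
    (hg0 : ∀ x ∈ Ici c, 0 ≤ g x)
    (hN : ∀ n : ℕ, {k | ℓ k ≤ c + n + 1}.Finite ∧ (Nat.card {k | ℓ k ≤ c + n + 1} : ℝ) ≤ N n)
    (hsum : Summable fun n : ℕ => N n * g (c + n)) :
    Summable (fun k => g (ℓ k)) ∧ ∑' k, g (ℓ k) ≤ ∑' n, N n * g (c + n) :=
  have hnonneg : 0 ≤ fun k => g (ℓ k) := fun k => hg0 _ (hl k)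
  have hbound := sum_le_tsum_of_shell_card_le hl hg hg0 hN hsum
  ⟨summable_of_sum_le hnonneg hbound, Real.tsum_le_of_sum_le hnonneg hbound⟩

end Shells

lemma mul_sub_sq_div_le (a x : ℝ) {b : ℝ} (hb : 0 < b) :
    a * x - x ^ 2 / b ≤ b * (a + 1) ^ 2 / 4 - x := by
  have hsq : 0 ≤ (x - b * (a + 1) / 2) ^ 2 / b := by positivity
  have hexpand : (x - b * (a + 1) / 2) ^ 2 / b = x ^ 2 / b - (a + 1) * x + b * (a + 1) ^ 2 / 4 := by
    field_simp
    ring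
  linarith

lemma summable_exp_mul_mul_exp_neg_sq_div (h c : ℝ) {b : ℝ} (hb : 0 < b) :
    Summable fun n : ℕ => exp (h * (c + n + 1)) * exp (-(c + n) ^ 2 / b) := by
  refine (summable_exp_neg_nat.mul_left (exp (h + b * (h + 1) ^ 2 / 4 - c))).of_nonneg_of_le
    (fun n => by positivity) fun n => ?_
  rw [← exp_add, ← exp_add, exp_le_exp, neg_div]
  linarith [mul_sub_sq_div_le h (c + n) hb]

lemma antitoneOn_exp_neg_sq_div {b : ℝ} (hb : 0 < b) :
    AntitoneOn (fun x => exp (-x ^ 2 / b)) (Ici 0) := by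
  intro x hx y _ hxy
  have : x ^ 2 ≤ y ^ 2 := pow_le_pow_left₀ hx hxy 2
  simp only [exp_le_exp]
  gcongr

lemma exp_neg_sq_div_four_mul_le {c x t : ℝ} (hc : 0 ≤ c) (hcx : c ≤ x) (ht : 0 < t)
    (ht1 : t ≤ 1) : exp (-x ^ 2 / (4 * t)) ≤ exp (-c ^ 2 / (8 * t)) * exp (-x ^ 2 / 8) := by
  rw [← exp_add, exp_le_exp]
  have hcx_sq : c ^ 2 / (8 * t) ≤ x ^ 2 / (8 * t) := by gcongr
  have ht_le : x ^ 2 / 8 ≤ x ^ 2 / (8 * t) :=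
    div_le_div_of_nonneg_left (sq_nonneg x) (by positivity) (by linarith)
  have hhalf : -x ^ 2 / (4 * t) = -(x ^ 2 / (8 * t)) - x ^ 2 / (8 * t) := by
    field_simp
    ring
  rw [hhalf, neg_div, neg_div]
  linarith

theorem stmt16_general (c h C : ℝ) (hc : 0 < c) (hC : 0 < C)
    (ℓ : ℕ → ℝ) (hl : ∀ k, c ≤ ℓ k)
    (hcount : ∀ R : ℝ, 0 < R → {k : ℕ | ℓ k ≤ R}.Finite ∧
      (Nat.card {k : ℕ | ℓ k ≤ R} : ℝ) ≤ C * Real.exp (h * R)) :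
    (∀ t : ℝ, 0 < t → Summable (fun k : ℕ => Real.exp (-(ℓ k) ^ 2 / (4 * t)))) ∧
    ∃ C' : ℝ, 0 < C' ∧ ∀ t ∈ Set.Ioc (0:ℝ) 1,
      (∑' k : ℕ, Real.exp (-(ℓ k) ^ 2 / (4 * t))) ≤ C' * Real.exp (-c ^ 2 / (8 * t)) := by
  set N : ℕ → ℝ := fun n => C * exp (h * (c + n + 1))
  have hN_pos (n : ℕ) : 0 < N n := by positivity
  have hmajorant (b : ℝ) (hb : 0 < b) : Summable fun n : ℕ => N n * exp (-(c + n) ^ 2 / b) := by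
    simpa only [N, mul_assoc] using (summable_exp_mul_mul_exp_neg_sq_div h c hb).mul_left C
  have hshells (t : ℝ) (ht : 0 < t) :=
    summable_and_tsum_le_of_shell_card_le (g := fun x => exp (-x ^ 2 / (4 * t))) hl
      ((antitoneOn_exp_neg_sq_div (by positivity)).mono (Ici_subset_Ici.2 hc.le))
      (fun x _ => (exp_pos _).le) (fun n => hcount (c + n + 1) (by positivity))
      (hmajorant _ (by positivity))
  refine ⟨fun t ht => (hshells t ht).1, ∑' n, N n * exp (-(c + n) ^ 2 / 8),
    (hmajorant 8 (by norm_num)).tsum_pos (fun n => by positivity) 0 (by positivity),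
    fun t ⟨ht0, ht1⟩ => ?_⟩
  calc ∑' k, exp (-ℓ k ^ 2 / (4 * t))
      ≤ ∑' n, N n * exp (-(c + n) ^ 2 / (4 * t)) := (hshells t ht0).2
    _ ≤ ∑' n, exp (-c ^ 2 / (8 * t)) * (N n * exp (-(c + n) ^ 2 / 8)) := by
        refine (hmajorant _ (by positivity)).tsum_le_tsum (fun n => ?_)
          ((hmajorant 8 (by norm_num)).mul_left _)
        rw [mul_left_comm]
        exact mul_le_mul_of_nonneg_left
          (exp_neg_sq_div_four_mul_le hc.le (by simp) ht0 ht1) (hN_pos n).le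
    _ = (∑' n, N n * exp (-(c + n) ^ 2 / 8)) * exp (-c ^ 2 / (8 * t)) := by
        rw [tsum_mul_left, mul_comm]

/-- Gaussian-sum estimate from the proof of Proposition `hyperbcontr3`: if `ℓ_k ≥ c > 0`
and `#{k : ℓ_k ≤ R} ≤ C e^{hR}`, then `Σ_k e^{-ℓ_k²/(4t)}` converges for every `t > 0`
and is `≤ C' e^{-c²/(8t)}` for `t ∈ (0,1]`. -/
theorem stmt16 (c h C : ℝ) (hc : 0 < c) (hh : 0 < h) (hC : 0 < C)
    (ℓ : ℕ → ℝ) (hl : ∀ k, c ≤ ℓ k)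
    (hcount : ∀ R : ℝ, 0 < R → {k : ℕ | ℓ k ≤ R}.Finite ∧
      (Nat.card {k : ℕ | ℓ k ≤ R} : ℝ) ≤ C * Real.exp (h * R)) :
    (∀ t : ℝ, 0 < t → Summable (fun k : ℕ => Real.exp (-(ℓ k) ^ 2 / (4 * t)))) ∧
    ∃ C' : ℝ, 0 < C' ∧ ∀ t ∈ Set.Ioc (0:ℝ) 1,
      (∑' k : ℕ, Real.exp (-(ℓ k) ^ 2 / (4 * t))) ≤ C' * Real.exp (-c ^ 2 / (8 * t)) :=
  stmt16_general c h C hc hC ℓ hl hcount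
end
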